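/- arXiv:2202.09712 — 10 statements merged into one kernel-verified Lean document; each statement's English description precedes it below -/
import Mathlib

section
/- Let g : ℝ → ℝ be continuous and 1-periodic (g(y+1) = g(y) for all y). Then for every x ≥ 0, the oscillatory averages converge to the mean: lim_{ε→0⁺} ∫₀ˣ g(t/ε) dt = x · ∫₀¹ g(s) ds. -/
open MeasureTheory Set Filter

/-!
Substituting `t = ε s` gives `∫₀ˣ g(t/ε) dt = ε ∫₀^{x/ε} g`. Subtracting the linear drift
`u ∫₀¹ g` from the primitive `u ↦ ∫₀ᵘ g` leaves a continuous periodic, hence bounded, function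
`F` (`periodicPrimitive`), so `∫₀ˣ g(t/ε) dt - x ∫₀¹ g = ε F(x/ε) = O(ε)`.
-/

namespace Function.Periodic

variable {E : Type*} [NormedAddCommGroup E] [NormedSpace ℝ E]

noncomputable def periodicPrimitive (f : ℝ → E) (T u : ℝ) : E :=
  (∫ x in 0..u, f x) - (u / T) • ∫ x in 0..T, f x

variable {f : ℝ → E} {T : ℝ}

theorem periodic_periodicPrimitive (hf : Periodic f T) (hT : T ≠ 0)
    (h_int : IntervalIntegrable f volume 0 T) : Periodic (periodicPrimitive f T) T := by
  intro u
  rw [periodicPrimitive, periodicPrimitive,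
    hf.intervalIntegral_add_eq_add 0 u (hf.intervalIntegrable₀ hT h_int), zero_add,
    add_div, div_self hT, add_smul, one_smul]
  abel

theorem continuous_periodicPrimitive (hf : Periodic f T) (hT : T ≠ 0)
    (h_int : IntervalIntegrable f volume 0 T) : Continuous (periodicPrimitive f T) :=
  (intervalIntegral.continuous_primitive (hf.intervalIntegrable₀ hT h_int) 0).sub
    ((continuous_id.div_const T).smul continuous_const)

theorem exists_norm_periodicPrimitive_le (hf : Periodic f T) (hT : T ≠ 0)
    (h_int : IntervalIntegrable f volume 0 T) : ∃ C, ∀ u, ‖periodicPrimitive f T u‖ ≤ C := by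
  obtain ⟨C, hC⟩ := isBounded_iff_forall_norm_le.mp <|
    (hf.periodic_periodicPrimitive hT h_int).isBounded_of_continuous hT
      (hf.continuous_periodicPrimitive hT h_int)
  exact ⟨C, fun u => hC _ (mem_range_self u)⟩

end Function.Periodic

open Function.Periodic in
theorem stmt_2_general (g : ℝ → ℝ) (hg : Continuous g) (hper : ∀ y, g (y + 1) = g y)
    (x : ℝ) :
    Tendsto (fun ε => ∫ t in (0:ℝ)..x, g (t / ε))
      (nhdsWithin 0 (Ioi 0)) (nhds (x * ∫ s in (0:ℝ)..1, g s)) := by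
  have h_int : IntervalIntegrable g volume 0 1 := hg.intervalIntegrable 0 1
  obtain ⟨C, hC⟩ := exists_norm_periodicPrimitive_le hper one_ne_zero h_int
  have h_eq : ∀ ε ≠ 0, ∫ t in (0:ℝ)..x, g (t / ε)
      = x * (∫ s in (0:ℝ)..1, g s) + ε * periodicPrimitive g 1 (x / ε) := by
    intro ε hε
    rw [intervalIntegral.integral_comp_div g hε, periodicPrimitive, smul_eq_mul, smul_eq_mul,
      zero_div, div_one, mul_sub, ← mul_assoc, mul_div_cancel₀ x hε]
    ring
  have h_osc : Tendsto (fun ε => ε * periodicPrimitive g 1 (x / ε)) (nhdsWithin 0 (Ioi 0))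
      (nhds 0) :=
    (tendsto_nhdsWithin_of_tendsto_nhds tendsto_id).zero_mul_isBoundedUnder_le
      (isBoundedUnder_of ⟨C, fun ε => hC (x / ε)⟩)
  have h_lim := (tendsto_const_nhds (x := x * ∫ s in (0:ℝ)..1, g s)).add h_osc
  rw [add_zero] at h_lim
  exact h_lim.congr' (eventually_nhdsWithin_of_forall fun ε hε => (h_eq ε (ne_of_gt hε)).symm)

/-- Averaging of periodic oscillations: for continuous 1-periodic `g`,
`∫₀ˣ g(t/ε) dt → x ∫₀¹ g` as `ε → 0⁺`. -/
theorem stmt_2 (g : ℝ → ℝ) (hg : Continuous g) (hper : ∀ y, g (y + 1) = g y)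
    (x : ℝ) (hx : 0 ≤ x) :
    Tendsto (fun ε => ∫ t in (0:ℝ)..x, g (t / ε))
      (nhdsWithin 0 (Ioi 0)) (nhds (x * ∫ s in (0:ℝ)..1, g s)) :=
  stmt_2_general g hg hper x
end

section
/- Let g : ℝ → ℝ be continuous and 1-periodic (g(y+1) = g(y) for all y), and let M := sup_{y∈[0,1]} |g(y)|. Then for every ε > 0 and every x ∈ [0,1], |∫₀ˣ g(t/ε) dt − x · ∫₀¹ g(s) ds| ≤ 2 M ε. -/
/-!
Write `x / ε = n + θ` with `n ∈ ℤ` and `θ ∈ [0, 1)`. After the substitution `s = t / ε`, the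
integral over the `n` complete periods is exactly `n ∫₀¹ g`, so only a fraction of one period is
left over on each side: `ε ∫ g` over an interval of length `θ`, and `ε θ ∫₀¹ g`. Each is at most
`M ε`.
-/

open MeasureTheory Set

namespace Function.Periodic

variable {E : Type*} [NormedAddCommGroup E] [NormedSpace ℝ E] {f : ℝ → E} {T : ℝ}

theorem intervalIntegral_eq_add_floor_smul (hf : Periodic f T) (hT : T ≠ 0)
    (h_int : IntervalIntegrable f volume 0 T) (t : ℝ) :
    ∫ x in 0..t, f x =
      (∫ x in 0..Int.fract (t / T) * T, f x) + ⌊t / T⌋ • ∫ x in 0..T, f x := by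
  have h'_int := hf.intervalIntegrable₀ hT h_int
  conv_lhs => rw [← Int.fract_div_mul_self_add_zsmul_eq T t hT,
    ← intervalIntegral.integral_add_adjacent_intervals (h'_int 0 (Int.fract (t / T) * T)) (h'_int _ _)]
  rw [hf.intervalIntegral_add_zsmul_eq _ _ h'_int, hf.intervalIntegral_add_eq _ 0, zero_add]

theorem norm_intervalIntegral_sub_smul_le (hf : Periodic f T) (hT : 0 < T)
    (h_int : IntervalIntegrable f volume 0 T) {M : ℝ} (hM : ∀ y, ‖f y‖ ≤ M) (t : ℝ) :
    ‖(∫ x in 0..t, f x) - (t / T) • ∫ x in 0..T, f x‖ ≤ 2 * M * T := by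
  set θ := Int.fract (t / T)
  have hθ : θ ∈ Ico 0 1 := ⟨Int.fract_nonneg _, Int.fract_lt_one _⟩
  have hθT : θ * T ∈ Ico 0 T := Int.fract_div_mul_self_mem_Ico T t hT
  have h_rem : ‖∫ x in 0..θ * T, f x‖ ≤ M * T := by
    calc ‖∫ x in 0..θ * T, f x‖ ≤ M * |θ * T - 0| :=
          intervalIntegral.norm_integral_le_of_norm_le_const fun y _ => hM y
      _ ≤ M * T := by
          rw [sub_zero, abs_of_nonneg hθT.1]
          exact mul_le_mul_of_nonneg_left hθT.2.le ((norm_nonneg _).trans (hM 0))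
  have h_period : ‖∫ x in 0..T, f x‖ ≤ M * T := by
    simpa [abs_of_pos hT] using
      intervalIntegral.norm_integral_le_of_norm_le_const (a := 0) (b := T) fun y _ => hM y
  have h_split : (∫ x in 0..t, f x) - (t / T) • ∫ x in 0..T, f x =
      (∫ x in 0..θ * T, f x) - θ • ∫ x in 0..T, f x := by
    rw [hf.intervalIntegral_eq_add_floor_smul hT.ne' h_int, ← Int.fract_add_floor (t / T),
      add_smul, ← Int.cast_smul_eq_zsmul ℝ, Int.fract_add_floor]
    abel
  calc ‖(∫ x in 0..t, f x) - (t / T) • ∫ x in 0..T, f x‖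
      ≤ ‖∫ x in 0..θ * T, f x‖ + |θ| * ‖∫ x in 0..T, f x‖ := by
        rw [h_split, ← Real.norm_eq_abs, ← norm_smul]
        exact norm_sub_le _ _
    _ ≤ M * T + 1 * (M * T) := by
        gcongr
        rw [abs_of_nonneg hθ.1]
        exact hθ.2.le
    _ = 2 * M * T := by ring

theorem norm_intervalIntegral_comp_div_sub_smul_le (hf : Periodic f T) (hT : 0 < T)
    (h_int : IntervalIntegrable f volume 0 T) {M : ℝ} (hM : ∀ y, ‖f y‖ ≤ M) {ε : ℝ} (hε : 0 < ε)
    (x : ℝ) :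
    ‖(∫ t in 0..x, f (t / ε)) - (x / T) • ∫ s in 0..T, f s‖ ≤ 2 * M * T * ε := by
  have h_rescale : (∫ t in 0..x, f (t / ε)) - (x / T) • ∫ s in 0..T, f s =
      ε • ((∫ s in 0..x / ε, f s) - (x / ε / T) • ∫ s in 0..T, f s) := by
    rw [intervalIntegral.integral_comp_div f hε.ne', zero_div, smul_sub, smul_smul]
    congr 2
    field_simp
  rw [h_rescale, norm_smul, Real.norm_of_nonneg hε.le, mul_comm]
  exact mul_le_mul_of_nonneg_right (hf.norm_intervalIntegral_sub_smul_le hT h_int hM _) hε.le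

end Function.Periodic

/-- Quantitative averaging: for continuous 1-periodic `g` with `M = max_{[0,1]} |g|`,
`|∫₀ˣ g(t/ε) dt − x ∫₀¹ g| ≤ 2 M ε` for all `ε > 0` and `x ∈ [0,1]`. -/
theorem stmt_3 (g : ℝ → ℝ) (hg : Continuous g) (hper : ∀ y, g (y + 1) = g y)
    (M : ℝ) (hM : IsGreatest ((fun y => |g y|) '' Icc (0:ℝ) 1) M) :
    ∀ ε > (0:ℝ), ∀ x ∈ Icc (0:ℝ) 1,
      |(∫ t in (0:ℝ)..x, g (t / ε)) - x * ∫ s in (0:ℝ)..1, g s| ≤ 2 * M * ε := by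
  intro ε hε x _
  have hP : Function.Periodic g 1 := hper
  have h_bound : ∀ y, ‖g y‖ ≤ M := fun y => by
    obtain ⟨z, hz, hyz⟩ := hP.exists_mem_Ico₀ one_pos y
    rw [hyz]
    exact hM.2 ⟨z, Ico_subset_Icc_self hz, rfl⟩
  simpa using hP.norm_intervalIntegral_comp_div_sub_smul_le one_pos
    (hg.intervalIntegrable 0 1) h_bound hε x
end

section
/- Let g : ℝ → ℝ be continuous and 1-periodic (g(y+1) = g(y) for all y), and let φ : [0,1] → ℝ be continuous. Then lim_{ε→0⁺} ∫₀¹ g(x/ε) φ(x) dx = (∫₀¹ g(s) ds) · (∫₀¹ φ(x) dx); i.e., the rescaled functions g(·/ε) converge weakly (against continuous test functions) to the constant ∫₀¹ g. -/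
/-!
Replacing `g` by `g - ∫₀¹ g` reduces the claim to a mean-zero periodic `h`. Its primitive `H` is
then periodic, hence bounded, so `ε H(x/ε)` is an `O(ε)` antiderivative of `h(x/ε)`; integrating
by parts against a `C¹` test function gives an `O(ε)` bound. A continuous test function is
uniformly close to a polynomial (Weierstrass), and as `h` is bounded the resulting error is
uniform in `ε`.
-/

open MeasureTheory Set Filter Topology Asymptotics intervalIntegral Interval

theorem tendsto_nhds_zero_of_forall_approx {α : Type*} {l : Filter α} {F : α → ℝ}
    (h : ∀ δ > 0, ∃ G : α → ℝ, Tendsto G l (𝓝 0) ∧ ∀ᶠ a in l, |F a - G a| ≤ δ) :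
    Tendsto F l (𝓝 0) := by
  refine Metric.tendsto_nhds.2 fun η hη ↦ ?_
  obtain ⟨G, hG, hFG⟩ := h (η / 2) (half_pos hη)
  filter_upwards [hFG, Metric.tendsto_nhds.1 hG (η / 2) (half_pos hη)] with a hFGa hGa
  rw [Real.dist_eq, sub_zero] at hGa ⊢
  linarith [abs_sub_abs_le_abs_sub (F a) (G a)]

theorem intervalIntegrable_comp_div_mul {h φ : ℝ → ℝ} {a b : ℝ} (hh : Continuous h)
    (hφ : ContinuousOn φ [[a, b]]) (ε : ℝ) :
    IntervalIntegrable (fun x ↦ h (x / ε) * φ x) volume a b :=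
  ((hh.comp (continuous_id.div_const ε)).continuousOn.mul hφ).intervalIntegrable

namespace Function.Periodic

variable {h : ℝ → ℝ} {T : ℝ}

theorem primitive (hp : Periodic h T) (hh : Continuous h) (hmean : ∫ s in 0..T, h s = 0) :
    Periodic (fun y ↦ ∫ s in 0..y, h s) T := fun y ↦ by
  simp only [hp.intervalIntegral_add_eq_add 0 y fun _ _ ↦ hh.intervalIntegrable _ _, zero_add,
    hmean, add_zero]

theorem integral_comp_div_mul_isBigO (hp : Periodic h T) (hT : T ≠ 0) (hh : Continuous h)
    (hmean : ∫ s in 0..T, h s = 0) {ψ ψ' : ℝ → ℝ} {a b : ℝ}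
    (hψ : ∀ x ∈ [[a, b]], HasDerivAt ψ (ψ' x) x) (hψ' : ContinuousOn ψ' [[a, b]]) :
    (fun ε ↦ ∫ x in a..b, h (x / ε) * ψ x) =O[𝓝[>] 0] id := by
  set H : ℝ → ℝ := fun y ↦ ∫ s in 0..y, h s
  obtain ⟨M, hM⟩ := isBounded_iff_forall_norm_le.1 ((hp.primitive hh hmean).isBounded_of_continuous
    hT (continuous_primitive (fun _ _ ↦ hh.intervalIntegrable _ _) 0))
  obtain ⟨D, hD⟩ := isCompact_uIcc.exists_bound_of_continuousOn hψ'
  refine IsBigO.of_bound (M * (|ψ a| + |ψ b| + D * |b - a|)) ?_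
  filter_upwards [self_mem_nhdsWithin] with ε (hε : 0 < ε)
  have hεH : ∀ y, |ε * H y| ≤ ε * M := fun y ↦ by
    rw [abs_mul, abs_of_pos hε]
    exact mul_le_mul_of_nonneg_left (hM _ ⟨y, rfl⟩) hε.le
  have hu : ∀ x, HasDerivAt (fun x ↦ ε * H (x / ε)) (h (x / ε)) x := fun x ↦ by
    refine (((hh.integral_hasStrictDerivAt 0 (x / ε)).hasDerivAt.comp x
      ((hasDerivAt_id x).div_const ε)).const_mul ε).congr_deriv ?_
    field_simp
  have ibp := integral_mul_deriv_eq_deriv_mul hψ (fun x _ ↦ hu x)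
    hψ'.intervalIntegrable ((hh.comp (continuous_id.div_const ε)).intervalIntegrable a b)
  have hrest : ‖∫ x in a..b, ψ' x * (ε * H (x / ε))‖ ≤ D * (ε * M) * |b - a| :=
    norm_integral_le_of_norm_le_const fun x hx ↦ by
      rw [norm_mul]
      exact mul_le_mul (hD x (uIoc_subset_uIcc hx)) (hεH _) (norm_nonneg _)
        ((norm_nonneg _).trans (hD x (uIoc_subset_uIcc hx)))
  have hbd : ∀ y z, |ψ y * (ε * H z)| ≤ |ψ y| * (ε * M) := fun y z ↦ by
    rw [abs_mul]
    exact mul_le_mul_of_nonneg_left (hεH z) (abs_nonneg _)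
  simp_rw [mul_comm (h _)]
  rw [ibp, Real.norm_eq_abs, id, Real.norm_eq_abs, abs_of_pos hε]
  rw [Real.norm_eq_abs] at hrest
  calc _ ≤ |ψ b * (ε * H (b / ε)) - ψ a * (ε * H (a / ε))|
        + |∫ x in a..b, ψ' x * (ε * H (x / ε))| := abs_sub _ _
    _ ≤ |ψ b * (ε * H (b / ε))| + |ψ a * (ε * H (a / ε))|
        + |∫ x in a..b, ψ' x * (ε * H (x / ε))| := by gcongr; exact abs_sub _ _
    _ ≤ |ψ b| * (ε * M) + |ψ a| * (ε * M) + D * (ε * M) * |b - a| := by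
        gcongr <;> apply hbd
    _ = M * (|ψ a| + |ψ b| + D * |b - a|) * ε := by ring

theorem tendsto_integral_comp_div_mul (hp : Periodic h T) (hT : T ≠ 0) (hh : Continuous h)
    (hmean : ∫ s in 0..T, h s = 0) {φ : ℝ → ℝ} {a b : ℝ} (hφ : ContinuousOn φ [[a, b]]) :
    Tendsto (fun ε ↦ ∫ x in a..b, h (x / ε) * φ x) (𝓝[>] 0) (𝓝 0) := by
  obtain ⟨K, hK⟩ := isBounded_iff_forall_norm_le.1 (hp.isBounded_of_continuous hT hh)
  have hK0 : 0 ≤ K := (norm_nonneg _).trans (hK _ ⟨0, rfl⟩)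
  refine tendsto_nhds_zero_of_forall_approx fun δ hδ ↦ ?_
  obtain ⟨p, hpφ⟩ := exists_polynomial_near_of_continuousOn _ _ φ hφ (δ / (K * |b - a| + 1))
    (by positivity)
  refine ⟨fun ε ↦ ∫ x in a..b, h (x / ε) * p.eval x, ?_, Eventually.of_forall fun ε ↦ ?_⟩
  · exact (hp.integral_comp_div_mul_isBigO hT hh hmean (fun x _ ↦ p.hasDerivAt x)
      p.derivative.continuous.continuousOn).trans_tendsto
      (tendsto_id.mono_left nhdsWithin_le_nhds)
  have hclose : ∀ x ∈ Ι a b, ‖h (x / ε) * φ x - h (x / ε) * p.eval x‖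
      ≤ K * (δ / (K * |b - a| + 1)) := fun x hx ↦ by
    rw [← mul_sub, norm_mul, Real.norm_eq_abs (φ x - _), abs_sub_comm]
    exact mul_le_mul (hK _ ⟨_, rfl⟩) (hpφ x (uIoc_subset_uIcc hx)).le (abs_nonneg _) hK0
  have hratio : K * |b - a| / (K * |b - a| + 1) ≤ 1 :=
    (div_le_one (by positivity)).2 (by linarith)
  rw [← integral_sub (intervalIntegrable_comp_div_mul hh hφ ε)
    (intervalIntegrable_comp_div_mul hh p.continuous.continuousOn ε)]
  calc _ ≤ K * (δ / (K * |b - a| + 1)) * |b - a| := norm_integral_le_of_norm_le_const hclose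
    _ = δ * (K * |b - a| / (K * |b - a| + 1)) := by ring
    _ ≤ δ := mul_le_of_le_one_right hδ.le hratio

end Function.Periodic

/-- Weak convergence of oscillatory periodic functions to their mean:
`∫₀¹ g(x/ε) φ(x) dx → (∫₀¹ g)(∫₀¹ φ)` as `ε → 0⁺`. -/
theorem stmt_4 (g φ : ℝ → ℝ) (hg : Continuous g) (hper : ∀ y, g (y + 1) = g y)
    (hφ : ContinuousOn φ (Icc 0 1)) :
    Tendsto (fun ε => ∫ x in (0:ℝ)..1, g (x / ε) * φ x)
      (nhdsWithin 0 (Ioi 0))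
      (nhds ((∫ s in (0:ℝ)..1, g s) * ∫ x in (0:ℝ)..1, φ x)) := by
  set c := ∫ s in (0:ℝ)..1, g s
  have hφ' : ContinuousOn φ [[0, 1]] := by rwa [uIcc_of_le zero_le_one]
  have hmean : ∫ s in (0:ℝ)..1, (g s - c) = 0 := by
    simp [integral_sub (hg.intervalIntegrable 0 1) intervalIntegrable_const, c]
  have hcentered : ∀ ε, ∫ x in (0:ℝ)..1, (g (x / ε) - c) * φ x
      = (∫ x in (0:ℝ)..1, g (x / ε) * φ x) - c * ∫ x in (0:ℝ)..1, φ x := fun ε ↦ by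
    simp_rw [sub_mul]
    rw [integral_sub (intervalIntegrable_comp_div_mul hg hφ' ε)
      (hφ'.intervalIntegrable.const_mul c), intervalIntegral.integral_const_mul]
  rw [← tendsto_sub_nhds_zero_iff]
  simpa only [hcentered] using Function.Periodic.tendsto_integral_comp_div_mul (h := (g · - c))
    (fun y ↦ by simp only [hper]) one_ne_zero (hg.sub continuous_const) hmean hφ'
end

section
/- Let a : ℝ → ℝ be continuous and 1-periodic with α ≤ a(y) ≤ β for all y (0 < α ≤ β), and let f : [0,1] → ℝ be continuous. For ε > 0 set F(x) := ∫₀ˣ f(t) dt, c_ε := (∫₀¹ F(t)/a(t/ε) dt)/(∫₀¹ 1/a(t/ε) dt), and u_ε(x) := ∫₀ˣ (c_ε − F(t))/a(t/ε) dt, so that u_ε is the solution of −(a(x/ε) u_ε′)′ = f with u_ε(0) = u_ε(1) = 0. Let a* := (∫₀¹ 1/a(y) dy)⁻¹, c₀ := ∫₀¹ F(t) dt, and u₀(x) := (1/a*) ∫₀ˣ (c₀ − F(t)) dt, the solution of the homogenized problem −(a* u₀′)′ = f with u₀(0) = u₀(1) = 0. Then there exists a constant C > 0, independent of ε, such that for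 every ε ∈ (0,1], sup_{x∈[0,1]} |u_ε(x) − u₀(x)| ≤ C ε. -/
/-!
Write `b = 1 / a` and `m = ∫₀¹ b = 1 / a*`. The primitive `B` of `b - m` vanishing at `0` is
periodic, hence bounded, so `ε B (· / ε)` is a primitive of `b (· / ε) - m` of size `O(ε)`.
Integrating by parts against it gives `∫₀ˣ g(t) b(t/ε) dt = m ∫₀ˣ g + O(ε)` for every `g` with
bounded derivative; we take `g = c_ε - F`, where `|c_ε| ≤ sup |F|` because `c_ε` is a
`b(·/ε)`-weighted average of `F`. If `E(x)` is the error of this averaging, then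
`u_ε(x) - u₀(x) = E(x) - x E(1)`, since both `u_ε` and `u₀` vanish at `1`.
-/

open MeasureTheory Set intervalIntegral Function

noncomputable def meanZeroPrimitive (b : ℝ → ℝ) (T y : ℝ) : ℝ :=
  ∫ t in (0:ℝ)..y, (b t - T⁻¹ * ∫ s in (0:ℝ)..T, b s)

section MeanZeroPrimitive

variable {b : ℝ → ℝ} {T : ℝ}

theorem meanZeroPrimitive_zero : meanZeroPrimitive b T 0 = 0 :=
  integral_same

theorem hasDerivAt_meanZeroPrimitive (hb : Continuous b) (y : ℝ) :
    HasDerivAt (meanZeroPrimitive b T) (b y - T⁻¹ * ∫ s in (0:ℝ)..T, b s) y :=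
  ((hb.sub continuous_const).integral_hasStrictDerivAt 0 y).hasDerivAt

theorem continuous_meanZeroPrimitive (hb : Continuous b) : Continuous (meanZeroPrimitive b T) :=
  continuous_iff_continuousAt.2 fun y => (hasDerivAt_meanZeroPrimitive hb y).continuousAt

theorem Function.Periodic.meanZeroPrimitive (hper : Periodic b T) (hT : T ≠ 0)
    (hb : Continuous b) : Periodic (meanZeroPrimitive b T) T := by
  set m := T⁻¹ * ∫ s in (0:ℝ)..T, b s
  have hint : ∀ c d, IntervalIntegrable (fun t => b t - m) volume c d :=
    fun c d => (hb.sub continuous_const).intervalIntegrable c d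
  have hper' : Periodic (fun t => b t - m) T := fun t => by simp only [hper t]
  have hmean : ∫ t in (0:ℝ)..0 + T, (b t - m) = 0 := by
    rw [zero_add, integral_sub (hb.intervalIntegrable 0 T) intervalIntegrable_const,
      intervalIntegral.integral_const, smul_eq_mul, sub_zero, mul_inv_cancel_left₀ hT, sub_self]
  intro y
  change ∫ t in (0:ℝ)..y + T, (b t - m) = ∫ t in (0:ℝ)..y, (b t - m)
  rw [hper'.intervalIntegral_add_eq_add 0 y hint, hmean, add_zero]

theorem exists_abs_meanZeroPrimitive_le (hper : Periodic b T) (hT : T ≠ 0) (hb : Continuous b) :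
    ∃ M, ∀ y, |meanZeroPrimitive b T y| ≤ M := by
  obtain ⟨M, hM⟩ := ((hper.meanZeroPrimitive hT hb).isBounded_of_continuous hT
    (continuous_meanZeroPrimitive hb)).exists_norm_le
  exact ⟨M, fun y => hM _ (mem_range_self y)⟩

end MeanZeroPrimitive

theorem abs_integral_mul_comp_div_sub_le {b : ℝ → ℝ} {T M ε x L : ℝ} {g g' : ℝ → ℝ}
    (hb : Continuous b) (hM : ∀ y, |meanZeroPrimitive b T y| ≤ M) (hε : 0 < ε)
    (hg : ContinuousOn g (uIcc 0 x)) (hgg' : ∀ t ∈ Ioo (min 0 x) (max 0 x), HasDerivAt g (g' t) t)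
    (hg' : IntervalIntegrable g' volume 0 x) (hL : ∀ t ∈ uIcc 0 x, |g' t| ≤ L) :
    |(∫ t in (0:ℝ)..x, g t * b (t / ε)) - (T⁻¹ * ∫ s in (0:ℝ)..T, b s) * ∫ t in (0:ℝ)..x, g t|
      ≤ ε * M * (|g x| + L * |x|) := by
  set m := T⁻¹ * ∫ s in (0:ℝ)..T, b s
  set v : ℝ → ℝ := fun t => ε * meanZeroPrimitive b T (t / ε)
  have hv : ∀ t, HasDerivAt v (b (t / ε) - m) t := fun t => by
    refine (((hasDerivAt_meanZeroPrimitive (T := T) hb (t / ε)).comp t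
      ((hasDerivAt_id t).div_const ε)).const_mul ε).congr_deriv ?_
    rw [mul_one_div, mul_div_cancel₀ _ hε.ne']
  have hvM : ∀ t, |v t| ≤ ε * M := fun t => by
    rw [abs_mul, abs_of_pos hε]
    exact mul_le_mul_of_nonneg_left (hM _) hε.le
  have hbε : Continuous fun t => b (t / ε) := hb.comp (continuous_id.div_const ε)
  have hgi : IntervalIntegrable g volume 0 x := hg.intervalIntegrable
  have hibp := integral_mul_deriv_eq_deriv_mul_of_hasDerivAt hg
    (continuous_iff_continuousAt.2 fun t => (hv t).continuousAt).continuousOn hgg'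
    (fun t _ => hv t) hg' ((hbε.sub continuous_const).intervalIntegrable 0 x)
  have hsplit : (∫ t in (0:ℝ)..x, g t * b (t / ε)) - m * ∫ t in (0:ℝ)..x, g t
      = ∫ t in (0:ℝ)..x, g t * (b (t / ε) - m) := by
    simp only [mul_sub, integral_sub (hgi.mul_continuousOn hbε.continuousOn) (hgi.mul_const m),
      intervalIntegral.integral_mul_const, mul_comm m]
  have hrest : |∫ t in (0:ℝ)..x, g' t * v t| ≤ L * (ε * M) * |x - 0| :=
    intervalIntegral.norm_integral_le_of_norm_le_const (C := L * (ε * M)) fun t ht => by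
      rw [Real.norm_eq_abs, abs_mul]
      exact mul_le_mul (hL t (uIoc_subset_uIcc ht)) (hvM t) (abs_nonneg _)
        ((abs_nonneg _).trans (hL t (uIoc_subset_uIcc ht)))
  have hv0 : v 0 = 0 := by simp [v, meanZeroPrimitive_zero]
  calc _ = |g x * v x - ∫ t in (0:ℝ)..x, g' t * v t| := by
        rw [hsplit, hibp, hv0, mul_zero, sub_zero]
    _ ≤ |g x| * (ε * M) + L * (ε * M) * |x - 0| := by
        refine (abs_sub _ _).trans (add_le_add ?_ hrest)
        rw [abs_mul]
        exact mul_le_mul_of_nonneg_left (hvM x) (abs_nonneg _)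
    _ = ε * M * (|g x| + L * |x|) := by rw [sub_zero]; ring

theorem ContinuousOn.hasDerivAt_integral_of_mem_Ioo {f : ℝ → ℝ} {a b t : ℝ}
    (hf : ContinuousOn f (Icc a b)) (ht : t ∈ Ioo a b) :
    HasDerivAt (fun x => ∫ s in a..x, f s) (f t) t :=
  integral_hasDerivAt_right
    ((hf.mono (Icc_subset_Icc_right ht.2.le)).intervalIntegrable_of_Icc ht.1.le)
    ((hf.mono Ioo_subset_Icc_self).stronglyMeasurableAtFilter isOpen_Ioo t ht)
    (hf.continuousAt (Icc_mem_nhds ht.1 ht.2))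

theorem ContinuousOn.continuousOn_integral {f : ℝ → ℝ} {a b : ℝ} (hf : ContinuousOn f (Icc a b)) :
    ContinuousOn (fun x => ∫ s in a..x, f s) (Icc a b) :=
  (continuousOn_primitive hf.integrableOn_Icc).congr fun _ hx => integral_of_le hx.1

theorem abs_integral_mul_div_integral_le {F w : ℝ → ℝ} {a b K : ℝ} (hab : a ≤ b)
    (hw : IntervalIntegrable w volume a b) (hw0 : ∀ t ∈ Icc a b, 0 ≤ w t)
    (hK : ∀ t ∈ Icc a b, |F t| ≤ K) :
    |(∫ t in a..b, F t * w t) / ∫ t in a..b, w t| ≤ K := by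
  have hN : |∫ t in a..b, F t * w t| ≤ K * ∫ t in a..b, w t := by
    rw [← Real.norm_eq_abs, ← intervalIntegral.integral_const_mul]
    refine intervalIntegral.norm_integral_le_of_norm_le hab
      (Filter.Eventually.of_forall fun t ht => ?_) (hw.const_mul K)
    rw [Real.norm_eq_abs, abs_mul, abs_of_nonneg (hw0 t (Ioc_subset_Icc_self ht))]
    exact mul_le_mul_of_nonneg_right (hK t (Ioc_subset_Icc_self ht))
      (hw0 t (Ioc_subset_Icc_self ht))
  have hD : 0 ≤ ∫ t in a..b, w t := integral_nonneg hab hw0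
  rw [abs_div, abs_of_nonneg hD]
  exact div_le_of_le_mul₀ hD ((abs_nonneg _).trans (hK a (left_mem_Icc.2 hab))) hN

theorem integral_div_integral_sub_mul_eq_zero {F w : ℝ → ℝ} {a b : ℝ}
    (hw : IntervalIntegrable w volume a b)
    (hFw : IntervalIntegrable (fun t => F t * w t) volume a b)
    (hD : ∫ t in a..b, w t ≠ 0) :
    ∫ t in a..b, ((∫ s in a..b, F s * w s) / (∫ s in a..b, w s) - F t) * w t = 0 := by
  simp only [sub_mul, integral_sub (hw.const_mul _) hFw, intervalIntegral.integral_const_mul,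
    div_mul_cancel₀ _ hD, sub_self]

theorem abs_integral_mul_sub_mul_integral_le_two_mul {F w : ℝ → ℝ} {m c c₀ δ x : ℝ}
    (hF : ContinuousOn F (Icc 0 1)) (hx : x ∈ Icc (0:ℝ) 1)
    (hw1 : ∫ t in (0:ℝ)..1, (c - F t) * w t = 0) (hc₀ : ∫ t in (0:ℝ)..1, (c₀ - F t) = 0)
    (hEx : |(∫ t in (0:ℝ)..x, (c - F t) * w t) - m * ∫ t in (0:ℝ)..x, (c - F t)| ≤ δ)
    (hE1 : |(∫ t in (0:ℝ)..1, (c - F t) * w t) - m * ∫ t in (0:ℝ)..1, (c - F t)| ≤ δ) :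
    |(∫ t in (0:ℝ)..x, (c - F t) * w t) - m * ∫ t in (0:ℝ)..x, (c₀ - F t)| ≤ 2 * δ := by
  have hshift : ∀ y ∈ Icc (0:ℝ) 1,
      ∫ t in (0:ℝ)..y, (c - F t) = (∫ t in (0:ℝ)..y, (c₀ - F t)) + y * (c - c₀) := fun y hy => by
    have hFy : IntervalIntegrable F volume 0 y :=
      (hF.mono (Icc_subset_Icc_right hy.2)).intervalIntegrable_of_Icc hy.1
    simp only [integral_sub intervalIntegrable_const hFy, intervalIntegral.integral_const,
      smul_eq_mul]
    ring
  -- the boundary condition at `1` pins down the mismatch `m * (c - c₀)` of the two fluxes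
  have hflux : |m * (c - c₀)| ≤ δ := by
    rwa [hw1, hshift 1 (right_mem_Icc.2 zero_le_one), hc₀, zero_add, one_mul, zero_sub,
      abs_neg] at hE1
  have hx' : |x| ≤ 1 := abs_le.2 ⟨by linarith [hx.1], hx.2⟩
  calc _ = |((∫ t in (0:ℝ)..x, (c - F t) * w t) - m * ∫ t in (0:ℝ)..x, (c - F t))
        + x * (m * (c - c₀))| := by rw [hshift x hx]; ring_nf
    _ ≤ δ + 1 * δ := by
        refine (abs_add_le _ _).trans (add_le_add hEx ?_)
        rw [abs_mul]
        exact mul_le_mul hx' hflux (abs_nonneg _) zero_le_one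
    _ = 2 * δ := by ring

theorem abs_integral_const_sub_mul_comp_div_sub_le {b f F : ℝ → ℝ} {M Kf KF c ε x : ℝ}
    (hb : Continuous b) (hM : ∀ y, |meanZeroPrimitive b 1 y| ≤ M)
    (hf : ContinuousOn f (Icc 0 1)) (hFc : ContinuousOn F (Icc 0 1))
    (hFf : ∀ t ∈ Ioo (0:ℝ) 1, HasDerivAt F (f t) t)
    (hKf : ∀ t ∈ Icc (0:ℝ) 1, |f t| ≤ Kf) (hKF : ∀ t ∈ Icc (0:ℝ) 1, |F t| ≤ KF)
    (hc : |c| ≤ KF) (hε : 0 < ε) (hx : x ∈ Icc (0:ℝ) 1) :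
    |(∫ t in (0:ℝ)..x, (c - F t) * b (t / ε)) - (∫ s in (0:ℝ)..1, b s) * ∫ t in (0:ℝ)..x, (c - F t)|
      ≤ ε * (M * (2 * KF + Kf)) := by
  have hsub : uIcc 0 x ⊆ Icc (0:ℝ) 1 := uIcc_of_le hx.1 ▸ Icc_subset_Icc_right hx.2
  have hderiv : ∀ t ∈ Ioo (min 0 x) (max 0 x), HasDerivAt (fun y => c - F y) (-f t) t :=
    fun t ht => by
      rw [min_eq_left hx.1, max_eq_right hx.1] at ht
      exact (hFf t ⟨ht.1, ht.2.trans_le hx.2⟩).const_sub c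
  have hosc := abs_integral_mul_comp_div_sub_le (T := 1) (g := fun y => c - F y) hb hM hε
    (continuousOn_const.sub (hFc.mono hsub)) hderiv
    ((hf.mono hsub).intervalIntegrable).neg (fun t ht => by rw [abs_neg]; exact hKf t (hsub ht))
  rw [inv_one, one_mul] at hosc
  refine hosc.trans (le_of_eq_of_le (mul_assoc _ _ _) (mul_le_mul_of_nonneg_left ?_ hε.le))
  have hM0 : 0 ≤ M := (abs_nonneg _).trans (hM 0)
  have hKf0 : 0 ≤ Kf := (abs_nonneg _).trans (hKf 0 (left_mem_Icc.2 zero_le_one))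
  refine mul_le_mul_of_nonneg_left ?_ hM0
  have hgx : |c - F x| ≤ 2 * KF := by linarith [abs_sub c (F x), hKF x hx]
  have hLx : Kf * |x| ≤ Kf := by
    rw [abs_of_nonneg hx.1]; exact mul_le_of_le_one_right hKf0 hx.2
  linarith

theorem abs_integral_flux_sub_mul_comp_div_sub_le {b f F : ℝ → ℝ} {M Kf KF ε x : ℝ}
    (hb : Continuous b) (hbpos : ∀ y, 0 < b y) (hM : ∀ y, |meanZeroPrimitive b 1 y| ≤ M)
    (hf : ContinuousOn f (Icc 0 1)) (hFc : ContinuousOn F (Icc 0 1))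
    (hFf : ∀ t ∈ Ioo (0:ℝ) 1, HasDerivAt F (f t) t)
    (hKf : ∀ t ∈ Icc (0:ℝ) 1, |f t| ≤ Kf) (hKF : ∀ t ∈ Icc (0:ℝ) 1, |F t| ≤ KF)
    (hε : 0 < ε) (hx : x ∈ Icc (0:ℝ) 1) :
    |(∫ t in (0:ℝ)..x,
        ((∫ s in (0:ℝ)..1, F s * b (s / ε)) / (∫ s in (0:ℝ)..1, b (s / ε)) - F t) * b (t / ε))
      - (∫ s in (0:ℝ)..1, b s) * ∫ t in (0:ℝ)..x, ((∫ s in (0:ℝ)..1, F s) - F t)|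
      ≤ 2 * (ε * (M * (2 * KF + Kf))) := by
  have hbε : Continuous fun t => b (t / ε) := hb.comp (continuous_id.div_const ε)
  have hFi : IntervalIntegrable F volume 0 1 := hFc.intervalIntegrable_of_Icc zero_le_one
  have hcK : |(∫ s in (0:ℝ)..1, F s * b (s / ε)) / ∫ s in (0:ℝ)..1, b (s / ε)| ≤ KF :=
    abs_integral_mul_div_integral_le zero_le_one (hbε.intervalIntegrable 0 1)
      (fun t _ => (hbpos _).le) hKF
  have hflux := integral_div_integral_sub_mul_eq_zero (hbε.intervalIntegrable 0 1)
    (hFi.mul_continuousOn hbε.continuousOn)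
    (intervalIntegral_pos_of_pos_on (hbε.intervalIntegrable 0 1) (fun t _ => hbpos _) one_pos).ne'
  have hflux₀ : ∫ t in (0:ℝ)..1, ((∫ s in (0:ℝ)..1, F s) - F t) = 0 := by
    simp [integral_sub intervalIntegrable_const hFi]
  have hosc := fun y (hy : y ∈ Icc (0:ℝ) 1) =>
    abs_integral_const_sub_mul_comp_div_sub_le hb hM hf hFc hFf hKf hKF hcK hε hy
  exact abs_integral_mul_sub_mul_integral_le_two_mul hFc hx hflux hflux₀ (hosc x hx)
    (hosc 1 (right_mem_Icc.2 zero_le_one))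

theorem stmt_7_general (a f F u0 : ℝ → ℝ) (α β astar c0 : ℝ) (c : ℝ → ℝ) (u : ℝ → ℝ → ℝ)
    (hα : 0 < α)
    (ha : Continuous a) (hper : ∀ y, a (y + 1) = a y)
    (hbd : ∀ y, α ≤ a y ∧ a y ≤ β)
    (hf : ContinuousOn f (Icc 0 1))
    (hF : ∀ x, F x = ∫ t in (0:ℝ)..x, f t)
    (hc : ∀ ε, c ε = (∫ t in (0:ℝ)..1, F t / a (t / ε)) / (∫ t in (0:ℝ)..1, 1 / a (t / ε)))
    (hu : ∀ ε x, u ε x = ∫ t in (0:ℝ)..x, (c ε - F t) / a (t / ε))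
    (hastar : astar = (∫ y in (0:ℝ)..1, 1 / a y)⁻¹)
    (hc0 : c0 = ∫ t in (0:ℝ)..1, F t)
    (hu0 : ∀ x, u0 x = (1 / astar) * ∫ t in (0:ℝ)..x, (c0 - F t)) :
    ∃ C > (0:ℝ), ∀ ε ∈ Ioc (0:ℝ) 1, ∀ x ∈ Icc (0:ℝ) 1,
      |u ε x - u0 x| ≤ C * ε := by
  let b : ℝ → ℝ := fun y => 1 / a y
  have hbpos : ∀ y, 0 < b y := fun y => one_div_pos.2 (hα.trans_le (hbd y).1)
  have hb : Continuous b := continuous_const.div ha fun y => one_div_pos.1 (hbpos y) |>.ne'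
  obtain ⟨M, hM⟩ := exists_abs_meanZeroPrimitive_le (fun y => by simp only [b, hper])
    one_ne_zero hb
  have hFc : ContinuousOn F (Icc 0 1) := funext hF ▸ hf.continuousOn_integral
  have hFf : ∀ t ∈ Ioo (0:ℝ) 1, HasDerivAt F (f t) t := fun t ht =>
    funext hF ▸ hf.hasDerivAt_integral_of_mem_Ioo ht
  obtain ⟨Kf, hKf⟩ := isCompact_Icc.exists_bound_of_continuousOn hf
  obtain ⟨KF, hKF⟩ := isCompact_Icc.exists_bound_of_continuousOn hFc
  have hK0 : 0 ≤ M * (2 * KF + Kf) := mul_nonneg ((abs_nonneg _).trans (hM 0))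
    (by linarith [(norm_nonneg _).trans (hKF 0 (left_mem_Icc.2 zero_le_one)),
      (norm_nonneg _).trans (hKf 0 (left_mem_Icc.2 zero_le_one))])
  refine ⟨2 * (M * (2 * KF + Kf)) + 1, by linarith, fun ε hε x hx => ?_⟩
  have key := abs_integral_flux_sub_mul_comp_div_sub_le hb hbpos hM hf hFc hFf hKf hKF hε.1 hx
  simp only [b, mul_one_div] at key
  rw [hu, hu0, hc, hc0, hastar, div_inv_eq_mul, one_mul]
  linarith [hε.1]

/-- `L^∞` convergence rate of periodic homogenization in 1D:
`sup_{x∈[0,1]} |u_ε(x) − u₀(x)| ≤ C ε`. -/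
theorem stmt_7 (a f F u0 : ℝ → ℝ) (α β astar c0 : ℝ) (c : ℝ → ℝ) (u : ℝ → ℝ → ℝ)
    (hα : 0 < α) (hαβ : α ≤ β)
    (ha : Continuous a) (hper : ∀ y, a (y + 1) = a y)
    (hbd : ∀ y, α ≤ a y ∧ a y ≤ β)
    (hf : ContinuousOn f (Icc 0 1))
    (hF : ∀ x, F x = ∫ t in (0:ℝ)..x, f t)
    (hc : ∀ ε, c ε = (∫ t in (0:ℝ)..1, F t / a (t / ε)) / (∫ t in (0:ℝ)..1, 1 / a (t / ε)))
    (hu : ∀ ε x, u ε x = ∫ t in (0:ℝ)..x, (c ε - F t) / a (t / ε))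
    (hastar : astar = (∫ y in (0:ℝ)..1, 1 / a y)⁻¹)
    (hc0 : c0 = ∫ t in (0:ℝ)..1, F t)
    (hu0 : ∀ x, u0 x = (1 / astar) * ∫ t in (0:ℝ)..x, (c0 - F t)) :
    ∃ C > (0:ℝ), ∀ ε ∈ Ioc (0:ℝ) 1, ∀ x ∈ Icc (0:ℝ) 1,
      |u ε x - u0 x| ≤ C * ε :=
  stmt_7_general a f F u0 α β astar c0 c u hα ha hper hbd hf hF hc hu hastar hc0 hu0
end

section
/- Let a : ℝ → ℝ be continuous and 1-periodic with α ≤ a(y) ≤ β for all y (0 < α ≤ β), and let f : [0,1] → ℝ be continuous. With F(x) := ∫₀ˣ f(t) dt, c_ε := (∫₀¹ F(t)/a(t/ε) dt)/(∫₀¹ 1/a(t/ε) dt), u_ε′(x) := (c_ε − F(x))/a(x/ε), a* := (∫₀¹ 1/a(y) dy)⁻¹, c₀ := ∫₀¹ F(t) dt, and u₀′(x) := (c₀ − F(x))/a*, the derivatives of the multiscale solutions converge weakly to the derivative of the homogenized solution: for every continuous φ : [0,1] → ℝ, lim_{ε→0⁺} ∫₀¹ u_ε′(x) φ(x) dx =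 ∫₀¹ u₀′(x) φ(x) dx. -/
/-! The coefficient enters only through `1 / a (x / ε)`, a continuous `1`-periodic function
oscillating at scale `ε`, and such functions converge weakly to their mean `∫₀¹ 1 / a = 1 / a*`.
Against a `C¹` test function this follows by integrating by parts against `ε K (x / ε)`, where the
primitive `K` of the mean-zero function `1 / a - 1 / a*` is periodic and hence bounded, so the
integral is `O(ε)`; a continuous test function is approximated uniformly by polynomials.
Applied with the weights `F` and `1` this gives `c_ε → c₀`, and then with `φ` and `F φ` the
claim. -/

open MeasureTheory Set Filter Topology

theorem tendsto_zero_of_forall_eventually_abs_sub_le {α : Type*} {l : Filter α} {u : α → ℝ}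
    (K : ℝ)
    (h : ∀ δ > 0, ∃ v : α → ℝ, Tendsto v l (𝓝 0) ∧ ∀ᶠ x in l, |u x - v x| ≤ K * δ) :
    Tendsto u l (𝓝 0) := by
  rw [Metric.tendsto_nhds]
  intro η hη
  have hK : 0 < 2 * (|K| + 1) := by positivity
  obtain ⟨v, hv, huv⟩ := h (η / (2 * (|K| + 1))) (by positivity)
  have hKδ : K * (η / (2 * (|K| + 1))) < η / 2 := by
    rw [mul_div_assoc', div_lt_div_iff₀ hK two_pos]
    nlinarith [le_abs_self K]
  filter_upwards [Metric.tendsto_nhds.1 hv (η / 2) (by positivity), huv] with x hvx hx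
  rw [Real.dist_eq, sub_zero] at hvx ⊢
  linarith [abs_sub_abs_le_abs_sub (u x) (v x)]

namespace Function.Periodic

variable {k : ℝ → ℝ} {T : ℝ}

theorem periodic_primitive_of_integral_eq_zero (hk : Periodic k T)
    (hint : ∀ a b, IntervalIntegrable k volume a b) (h0 : ∫ t in 0..T, k t = 0) :
    Periodic (fun y => ∫ t in 0..y, k t) T := fun y => by
  simp only
  rw [← intervalIntegral.integral_add_adjacent_intervals (hint 0 y) (hint y (y + T)),
    hk.intervalIntegral_add_eq y 0, zero_add, h0, add_zero]

theorem exists_abs_le_of_continuous (hk : Periodic k T) (hT : T ≠ 0) (hc : Continuous k) :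
    ∃ C, ∀ y, |k y| ≤ C := by
  obtain ⟨C, hC⟩ := isBounded_iff_forall_norm_le.1 (hk.isBounded_of_continuous hT hc)
  exact ⟨C, fun y => hC _ (mem_range_self y)⟩

end Function.Periodic

theorem integral_mul_comp_div_eq_of_hasDerivAt {p k K : ℝ → ℝ} (hp : ContDiff ℝ 1 p)
    (hK : ∀ y, HasDerivAt K (k y) y) (hk : Continuous k) (a b : ℝ) {ε : ℝ} (hε : ε ≠ 0) :
    ∫ x in a..b, p x * k (x / ε) =
      ε * (p b * K (b / ε) - p a * K (a / ε) - ∫ x in a..b, deriv p x * K (x / ε)) := by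
  have hv : ∀ x, HasDerivAt (fun x => ε * K (x / ε)) (k (x / ε)) x := fun x => by
    refine (((hK (x / ε)).comp x ((hasDerivAt_id x).div_const ε)).const_mul ε).congr_deriv ?_
    field_simp
  rw [intervalIntegral.integral_mul_deriv_eq_deriv_mul
    (fun x _ => (hp.differentiable one_ne_zero x).hasDerivAt) (fun x _ => hv x)
    ((hp.continuous_deriv le_rfl).intervalIntegrable a b)
    ((hk.comp (continuous_id.div_const ε)).intervalIntegrable a b)]
  simp only [mul_left_comm _ ε, intervalIntegral.integral_const_mul]
  ring

theorem tendsto_integral_mul_comp_div_of_contDiff {p k : ℝ → ℝ} {T : ℝ} (hT : T ≠ 0)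
    (hp : ContDiff ℝ 1 p) (hk : Continuous k) (hkT : Function.Periodic k T)
    (h0 : ∫ t in 0..T, k t = 0) (a b : ℝ) :
    Tendsto (fun ε => ∫ x in a..b, p x * k (x / ε)) (𝓝[>] 0) (𝓝 0) := by
  set K := fun y => ∫ t in 0..y, k t
  have hK : ∀ y, HasDerivAt K (k y) y := fun y => (hk.integral_hasStrictDerivAt 0 y).hasDerivAt
  obtain ⟨C, hC⟩ := (hkT.periodic_primitive_of_integral_eq_zero
    hk.intervalIntegrable h0).exists_abs_le_of_continuous hT
    (continuous_iff_continuousAt.2 fun y => (hK y).continuousAt)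
  obtain ⟨D, hD⟩ := (isCompact_uIcc (a := a) (b := b)).exists_bound_of_continuousOn
    (hp.continuous_deriv le_rfl).continuousOn
  have hbound : ∀ ε > 0, |∫ x in a..b, p x * k (x / ε)| ≤
      ε * (|p b| * C + |p a| * C + D * C * |b - a|) := fun ε hε => by
    rw [integral_mul_comp_div_eq_of_hasDerivAt hp hK hk a b hε.ne', abs_mul, abs_of_pos hε]
    gcongr
    have hint : |∫ x in a..b, deriv p x * K (x / ε)| ≤ D * C * |b - a| := by
      rw [← Real.norm_eq_abs]
      refine intervalIntegral.norm_integral_le_of_norm_le_const fun x hx => ?_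
      rw [Real.norm_eq_abs, abs_mul]
      exact mul_le_mul (hD x (uIoc_subset_uIcc hx)) (hC _) (abs_nonneg _)
        ((abs_nonneg _).trans (hD x (uIoc_subset_uIcc hx)))
    have hb : |p b * K (b / ε)| ≤ |p b| * C := by
      rw [abs_mul]; exact mul_le_mul_of_nonneg_left (hC _) (abs_nonneg _)
    have ha : |p a * K (a / ε)| ≤ |p a| * C := by
      rw [abs_mul]; exact mul_le_mul_of_nonneg_left (hC _) (abs_nonneg _)
    linarith [abs_sub (p b * K (b / ε) - p a * K (a / ε)) (∫ x in a..b, deriv p x * K (x / ε)),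
      abs_sub (p b * K (b / ε)) (p a * K (a / ε))]
  refine squeeze_zero_norm' (eventually_nhdsWithin_of_forall hbound) ?_
  exact tendsto_nhdsWithin_of_tendsto_nhds ((continuous_mul_const _).tendsto' 0 0 (zero_mul _))

theorem tendsto_integral_mul_comp_div_of_integral_eq_zero {g k : ℝ → ℝ} {T a b : ℝ}
    (hT : T ≠ 0) (hab : a ≤ b) (hg : ContinuousOn g (Icc a b)) (hk : Continuous k)
    (hkT : Function.Periodic k T) (h0 : ∫ t in 0..T, k t = 0) :
    Tendsto (fun ε => ∫ x in a..b, g x * k (x / ε)) (𝓝[>] 0) (𝓝 0) := by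
  obtain ⟨C, hC⟩ := hkT.exists_abs_le_of_continuous hT hk
  refine tendsto_zero_of_forall_eventually_abs_sub_le (C * (b - a)) fun δ hδ => ?_
  obtain ⟨p, hp⟩ := exists_polynomial_near_of_continuousOn a b g hg δ hδ
  refine ⟨fun ε => ∫ x in a..b, p.eval x * k (x / ε),
    tendsto_integral_mul_comp_div_of_contDiff hT (p.contDiff_aeval 1) hk hkT h0 a b,
    Eventually.of_forall fun ε => ?_⟩
  have hkε : Continuous fun x => k (x / ε) := hk.comp (continuous_id.div_const ε)
  have hgk : IntervalIntegrable (fun x => g x * k (x / ε)) volume a b :=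
    (hg.mul hkε.continuousOn).intervalIntegrable_of_Icc hab
  have hpk : IntervalIntegrable (fun x => p.eval x * k (x / ε)) volume a b :=
    (p.continuous.mul hkε).intervalIntegrable a b
  rw [← intervalIntegral.integral_sub hgk hpk, ← Real.norm_eq_abs]
  calc _ ≤ δ * C * |b - a| := intervalIntegral.norm_integral_le_of_norm_le_const fun x hx => by
        rw [Real.norm_eq_abs, ← sub_mul, abs_mul, abs_sub_comm]
        exact mul_le_mul (hp x (Ioc_subset_Icc_self (by rwa [uIoc_of_le hab] at hx))).le (hC _)
          (abs_nonneg _) hδ.le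
    _ = C * (b - a) * δ := by rw [abs_of_nonneg (sub_nonneg.2 hab)]; ring

theorem tendsto_integral_mul_comp_div {g h : ℝ → ℝ} {T a b : ℝ}
    (hT : T ≠ 0) (hab : a ≤ b) (hg : ContinuousOn g (Icc a b)) (hh : Continuous h)
    (hhT : Function.Periodic h T) :
    Tendsto (fun ε => ∫ x in a..b, g x * h (x / ε)) (𝓝[>] 0)
      (𝓝 ((∫ x in a..b, g x) * ⨍ y in 0..T, h y)) := by
  set M := ⨍ y in 0..T, h y with hM
  have h0 : ∫ y in 0..T, (h y - M) = 0 := by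
    rw [intervalIntegral.integral_sub (hh.intervalIntegrable _ _) intervalIntegrable_const,
      intervalIntegral.integral_const, hM, interval_average_eq, smul_smul]
    simp [hT]
  have hsplit : ∀ ε, ∫ x in a..b, g x * h (x / ε) =
      (∫ x in a..b, g x * (h (x / ε) - M)) + (∫ x in a..b, g x) * M := fun ε => by
    have hgh : IntervalIntegrable (fun x => g x * (h (x / ε) - M)) volume a b :=
      (hg.mul ((hh.comp (continuous_id.div_const ε)).sub continuous_const).continuousOn)
        |>.intervalIntegrable_of_Icc hab
    rw [← intervalIntegral.integral_mul_const, ← intervalIntegral.integral_add hgh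
      ((hg.intervalIntegrable_of_Icc hab).mul_const M)]
    simp only [mul_sub, sub_add_cancel]
  simp only [hsplit]
  simpa using (tendsto_integral_mul_comp_div_of_integral_eq_zero hT hab hg
    (hh.sub continuous_const) (fun y => by simp [hhT y]) h0).add_const ((∫ x in a..b, g x) * M)

theorem tendsto_div_integral_mul_comp_div {F w : ℝ → ℝ} {T a b : ℝ}
    (hT : T ≠ 0) (hab : a < b) (hF : ContinuousOn F (Icc a b)) (hw : Continuous w)
    (hwT : Function.Periodic w T) (hw0 : ⨍ y in 0..T, w y ≠ 0) :
    Tendsto (fun ε => (∫ x in a..b, F x * w (x / ε)) / ∫ x in a..b, w (x / ε)) (𝓝[>] 0)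
      (𝓝 (⨍ x in a..b, F x)) := by
  have hnum := tendsto_integral_mul_comp_div hT hab.le hF hw hwT
  have hden := tendsto_integral_mul_comp_div hT hab.le continuousOn_const hw hwT (g := fun _ => 1)
  simp only [one_mul, intervalIntegral.integral_const, smul_eq_mul, mul_one] at hden
  rw [interval_average_eq_div, ← mul_div_mul_right _ _ hw0]
  exact hnum.div hden (mul_ne_zero (sub_ne_zero.2 hab.ne') hw0)

theorem tendsto_integral_sub_mul_mul_comp_div {c F φ w : ℝ → ℝ} {c₀ T a b : ℝ}
    (hT : T ≠ 0) (hab : a ≤ b) (hc : Tendsto c (𝓝[>] 0) (𝓝 c₀))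
    (hF : ContinuousOn F (Icc a b)) (hφ : ContinuousOn φ (Icc a b)) (hw : Continuous w)
    (hwT : Function.Periodic w T) :
    Tendsto (fun ε => ∫ x in a..b, (c ε - F x) * φ x * w (x / ε)) (𝓝[>] 0)
      (𝓝 ((∫ x in a..b, (c₀ - F x) * φ x) * ⨍ y in 0..T, w y)) := by
  have hint : ∀ {g : ℝ → ℝ}, ContinuousOn g (Icc a b) → IntervalIntegrable g volume a b :=
    fun hg => hg.intervalIntegrable_of_Icc hab
  have hsplit : ∀ ε, ∫ x in a..b, (c ε - F x) * φ x * w (x / ε) =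
      c ε * (∫ x in a..b, φ x * w (x / ε)) - ∫ x in a..b, F x * φ x * w (x / ε) := fun ε => by
    have hwε : ContinuousOn (fun x => w (x / ε)) (Icc a b) :=
      (hw.comp (continuous_id.div_const ε)).continuousOn
    have h1 : IntervalIntegrable (fun x => φ x * w (x / ε)) volume a b := hint (hφ.mul hwε)
    have h2 : IntervalIntegrable (fun x => F x * φ x * w (x / ε)) volume a b :=
      hint ((hF.mul hφ).mul hwε)
    rw [← intervalIntegral.integral_const_mul, ← intervalIntegral.integral_sub (h1.const_mul _) h2]
    congr 1 with x
    ring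
  have hlim : (∫ x in a..b, (c₀ - F x) * φ x) =
      c₀ * (∫ x in a..b, φ x) - ∫ x in a..b, F x * φ x := by
    have h : IntervalIntegrable (fun x => F x * φ x) volume a b := hint (hF.mul hφ)
    rw [← intervalIntegral.integral_const_mul, ← intervalIntegral.integral_sub
      ((hint hφ).const_mul _) h]
    congr 1 with x
    ring
  simp only [hsplit]
  rw [hlim, sub_mul, mul_assoc]
  exact (hc.mul (tendsto_integral_mul_comp_div hT hab hφ hw hwT)).sub
    (tendsto_integral_mul_comp_div hT hab (hF.mul hφ) hw hwT)

theorem stmt_8_general (a f F : ℝ → ℝ) (α β astar c0 : ℝ) (c : ℝ → ℝ)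
    (hα : 0 < α)
    (ha : Continuous a) (hper : ∀ y, a (y + 1) = a y)
    (hbd : ∀ y, α ≤ a y ∧ a y ≤ β)
    (hf : ContinuousOn f (Icc 0 1))
    (hF : ∀ x, F x = ∫ t in (0:ℝ)..x, f t)
    (hc : ∀ ε, c ε = (∫ t in (0:ℝ)..1, F t / a (t / ε)) / (∫ t in (0:ℝ)..1, 1 / a (t / ε)))
    (hastar : astar = (∫ y in (0:ℝ)..1, 1 / a y)⁻¹)
    (hc0 : c0 = ∫ t in (0:ℝ)..1, F t) :
    ∀ φ : ℝ → ℝ, ContinuousOn φ (Icc 0 1) →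
      Tendsto (fun ε => ∫ x in (0:ℝ)..1, (c ε - F x) / a (x / ε) * φ x)
        (nhdsWithin 0 (Ioi 0))
        (nhds (∫ x in (0:ℝ)..1, (c0 - F x) / astar * φ x)) := by
  intro φ hφ
  have hapos : ∀ y, 0 < a y := fun y => hα.trans_le (hbd y).1
  have hw : Continuous fun y => 1 / a y := continuous_const.div ha fun y => (hapos y).ne'
  have hwT : Function.Periodic (fun y => 1 / a y) 1 := fun y => by simp only [hper]
  have hM : ⨍ y in 0..1, 1 / a y = astar⁻¹ := by
    rw [interval_average_eq, hastar, inv_inv]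
    simp
  have hM0 : astar⁻¹ ≠ 0 := by
    rw [hastar, inv_inv]
    exact (intervalIntegral.intervalIntegral_pos_of_pos_on (hw.intervalIntegrable 0 1)
      (fun y _ => one_div_pos.2 (hapos y)) one_pos).ne'
  have hFc : ContinuousOn F (Icc 0 1) := by
    rw [funext hF, ← uIcc_of_le zero_le_one]
    exact intervalIntegral.continuousOn_primitive_interval
      (by rw [uIcc_of_le zero_le_one]; exact hf.integrableOn_Icc)
  have hc_lim : Tendsto c (𝓝[>] 0) (𝓝 c0) := by
    have := tendsto_div_integral_mul_comp_div one_ne_zero one_pos hFc hw hwT (hM ▸ hM0)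
    simpa only [mul_one_div, ← hc, interval_average_eq_div, sub_zero, div_one, ← hc0] using this
  have := tendsto_integral_sub_mul_mul_comp_div one_ne_zero zero_le_one hc_lim hFc hφ hw hwT
  simp only [hM, mul_one_div] at this
  simpa [div_eq_mul_inv, mul_right_comm, intervalIntegral.integral_mul_const] using this

/-- Weak convergence of the derivatives of the multiscale solutions to the derivative of
the homogenized solution: `∫₀¹ u_ε′ φ → ∫₀¹ u₀′ φ` for every continuous test function `φ`. -/
theorem stmt_8 (a f F : ℝ → ℝ) (α β astar c0 : ℝ) (c : ℝ → ℝ)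
    (hα : 0 < α) (hαβ : α ≤ β)
    (ha : Continuous a) (hper : ∀ y, a (y + 1) = a y)
    (hbd : ∀ y, α ≤ a y ∧ a y ≤ β)
    (hf : ContinuousOn f (Icc 0 1))
    (hF : ∀ x, F x = ∫ t in (0:ℝ)..x, f t)
    (hc : ∀ ε, c ε = (∫ t in (0:ℝ)..1, F t / a (t / ε)) / (∫ t in (0:ℝ)..1, 1 / a (t / ε)))
    (hastar : astar = (∫ y in (0:ℝ)..1, 1 / a y)⁻¹)
    (hc0 : c0 = ∫ t in (0:ℝ)..1, F t) :
    ∀ φ : ℝ → ℝ, ContinuousOn φ (Icc 0 1) →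
      Tendsto (fun ε => ∫ x in (0:ℝ)..1, (c ε - F x) / a (x / ε) * φ x)
        (nhdsWithin 0 (Ioi 0))
        (nhds (∫ x in (0:ℝ)..1, (c0 - F x) / astar * φ x)) :=
  stmt_8_general a f F α β astar c0 c hα ha hper hbd hf hF hc hastar hc0
end

section
/- Let a : ℝ → ℝ be continuous and 1-periodic with α ≤ a(y) ≤ β for all y (0 < α ≤ β), and let f : [0,1] → ℝ be continuous. With F(x) := ∫₀ˣ f(t) dt, c_ε := (∫₀¹ F(t)/a(t/ε) dt)/(∫₀¹ 1/a(t/ε) dt), u_ε′(x) := (c_ε − F(x))/a(x/ε), a* := (∫₀¹ 1/a(y) dy)⁻¹, c₀ := ∫₀¹ F(t) dt and u₀′(x) := (c₀ − F(x))/a*, the fluxes converge uniformly: lim_{ε→0⁺} sup_{x∈[0,1]} |a(x/ε) u_ε′(x) − a* u₀′(x)| = 0, even though the derivatives u_ε′ themselves only converge weakly. -/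
/-!
The two fluxes are `c ε - F x` and `c₀ - F x`, so their difference is the constant `c ε - c₀` and
it suffices that `c ε → c₀`. Numerator and denominator of `c ε` are integrals `∫ φ t * g (t / ε)`
with `g = 1 / a` periodic, and these converge to `(∫ φ) * mean g`. For `g` of mean zero, integrate
by parts against `ε * G (t / ε)`, where the primitive `G` of `g` is periodic, hence bounded, so
everything is `O(ε)`.
-/

open MeasureTheory Set Filter Function Topology Interval intervalIntegral

theorem hasDerivAt_integral_of_continuousOn_Icc {f : ℝ → ℝ} {a b x : ℝ}
    (hf : ContinuousOn f (Icc a b)) (hx : x ∈ Ioo a b) :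
    HasDerivAt (fun u => ∫ t in a..u, f t) (f x) x := by
  have hnhds : Icc a b ∈ 𝓝 x := Icc_mem_nhds hx.1 hx.2
  exact integral_hasDerivAt_right
    ((hf.mono (Icc_subset_Icc le_rfl hx.2.le)).intervalIntegrable_of_Icc hx.1.le)
    ⟨Icc a b, hnhds, hf.aestronglyMeasurable measurableSet_Icc⟩ (hf.continuousAt hnhds)

theorem hasDerivAt_mul_integral_div {g : ℝ → ℝ} (hg : Continuous g) {ε : ℝ} (hε : ε ≠ 0)
    (t : ℝ) : HasDerivAt (fun t => ε * ∫ s in 0..t / ε, g s) (g (t / ε)) t := by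
  have h := (((hg.integral_hasStrictDerivAt 0 (t / ε)).hasDerivAt).comp t
    ((hasDerivAt_id t).div_const ε)).const_mul ε
  rwa [mul_comm, mul_assoc, one_div_mul_cancel hε, mul_one] at h

namespace Function.Periodic

variable {g φ φ' : ℝ → ℝ} {T a b : ℝ}

theorem primitive_of_integral_eq_zero (hg : Periodic g T)
    (hint : ∀ t₁ t₂, IntervalIntegrable g volume t₁ t₂) (hmean : ∫ x in 0..T, g x = 0) :
    Periodic (fun x => ∫ t in 0..x, g t) T := fun x => by
  simp only [hg.intervalIntegral_add_eq_add 0 x hint, zero_add, hmean, add_zero]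

theorem exists_abs_primitive_le_of_integral_eq_zero (hg : Periodic g T) (hT : T ≠ 0)
    (hcont : Continuous g) (hmean : ∫ x in 0..T, g x = 0) :
    ∃ C, ∀ x, |∫ t in 0..x, g t| ≤ C := by
  have hint : ∀ t₁ t₂, IntervalIntegrable g volume t₁ t₂ := hcont.intervalIntegrable
  obtain ⟨C, hC⟩ := ((hg.primitive_of_integral_eq_zero hint hmean).isBounded_of_continuous hT
    (continuous_primitive hint 0)).exists_norm_le
  exact ⟨C, fun x => hC _ (mem_range_self x)⟩


theorem tendsto_integral_mul_comp_div_of_integral_eq_zero (hg : Periodic g T) (hT : T ≠ 0)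
    (hcont : Continuous g) (hmean : ∫ x in 0..T, g x = 0) (hφ : ContinuousOn φ [[a, b]])
    (hφφ' : ∀ x ∈ Ioo (min a b) (max a b), HasDerivAt φ (φ' x) x)
    (hφ' : IntervalIntegrable φ' volume a b) :
    Tendsto (fun ε => ∫ t in a..b, φ t * g (t / ε)) (𝓝[>] 0) (𝓝 0) := by
  obtain ⟨C, hC⟩ := hg.exists_abs_primitive_le_of_integral_eq_zero hT hcont hmean
  have hC0 : 0 ≤ C := by simpa using hC 0
  set K := C * (|φ b| + |φ a| + |∫ t in a..b, (|φ' t|)|)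
  have hK : Tendsto (fun ε : ℝ => ε * K) (𝓝[>] 0) (𝓝 0) :=
    tendsto_nhdsWithin_of_tendsto_nhds (by simpa using (continuous_mul_const K).tendsto 0)
  refine squeeze_zero_norm' ?_ hK
  filter_upwards [self_mem_nhdsWithin] with ε (hε : 0 < ε)
  set G := fun t => ε * ∫ s in 0..t / ε, g s
  have hG : ∀ t, HasDerivAt G (g (t / ε)) t := hasDerivAt_mul_integral_div hcont hε.ne'
  have hG_le : ∀ t, |G t| ≤ ε * C := fun t => by
    rw [abs_mul, abs_of_pos hε]
    exact mul_le_mul_of_nonneg_left (hC _) hε.le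
  rw [integral_mul_deriv_eq_deriv_mul_of_hasDerivAt hφ
    (fun t _ => (hG t).continuousAt.continuousWithinAt) hφφ' (fun t _ => hG t) hφ'
    ((hcont.comp (continuous_id.div_const ε)).intervalIntegrable a b)]
  have hrem : ‖∫ t in a..b, φ' t * G t‖ ≤ ε * C * |∫ t in a..b, (|φ' t|)| := by
    refine (norm_integral_le_abs_of_norm_le (g := fun t => |φ' t| * (ε * C)) ?_
      (hφ'.abs.mul_const _)).trans_eq ?_
    · exact ae_of_all _ fun t => by
        rw [Real.norm_eq_abs, abs_mul]; exact mul_le_mul_of_nonneg_left (hG_le t) (abs_nonneg _)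
    · rw [intervalIntegral.integral_mul_const, abs_mul, abs_of_nonneg (mul_nonneg hε.le hC0),
        mul_comm]
  calc ‖φ b * G b - φ a * G a - ∫ t in a..b, φ' t * G t‖
      ≤ |φ b| * |G b| + |φ a| * |G a| + ‖∫ t in a..b, φ' t * G t‖ := by
        simp only [Real.norm_eq_abs, ← abs_mul]
        exact (abs_sub _ _).trans (by gcongr; exact abs_sub _ _)
    _ ≤ |φ b| * (ε * C) + |φ a| * (ε * C) + ε * C * |∫ t in a..b, (|φ' t|)| := by
        gcongr
        exacts [hG_le b, hG_le a]
    _ = ε * K := by ring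

theorem tendsto_integral_mul_comp_div (hg : Periodic g T) (hT : T ≠ 0) (hcont : Continuous g)
    (hφ : ContinuousOn φ [[a, b]]) (hφφ' : ∀ x ∈ Ioo (min a b) (max a b), HasDerivAt φ (φ' x) x)
    (hφ' : IntervalIntegrable φ' volume a b) :
    Tendsto (fun ε => ∫ t in a..b, φ t * g (t / ε)) (𝓝[>] 0)
      (𝓝 ((∫ t in a..b, φ t) * ((∫ y in 0..T, g y) / T))) := by
  set m := (∫ y in 0..T, g y) / T
  have hmean : ∫ y in 0..T, (g y - m) = 0 := by
    rw [intervalIntegral.integral_sub (hcont.intervalIntegrable _ _) intervalIntegrable_const,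
      intervalIntegral.integral_const, smul_eq_mul, sub_zero, mul_div_cancel₀ _ hT, sub_self]
  have hsplit : ∀ ε, ∫ t in a..b, φ t * g (t / ε) =
      (∫ t in a..b, φ t * (g (t / ε) - m)) + (∫ t in a..b, φ t) * m := fun ε => by
    rw [← intervalIntegral.integral_mul_const, ← intervalIntegral.integral_add]
    · simp only [mul_sub, sub_add_cancel]
    · exact (hφ.mul ((hcont.comp (continuous_id.div_const ε)).sub
        continuous_const).continuousOn).intervalIntegrable
    · exact (hφ.mul continuousOn_const).intervalIntegrable
  simpa only [hsplit, zero_add] using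
    (tendsto_integral_mul_comp_div_of_integral_eq_zero
      (show Periodic (fun y => g y - m) T from fun x => by simp only [hg x]) hT
      (hcont.sub continuous_const) hmean hφ hφφ' hφ').add_const ((∫ t in a..b, φ t) * m)

end Function.Periodic

theorem stmt_9_general (a f F : ℝ → ℝ) (α β astar c0 : ℝ) (c : ℝ → ℝ)
    (hα : 0 < α)
    (ha : Continuous a) (hper : ∀ y, a (y + 1) = a y)
    (hbd : ∀ y, α ≤ a y ∧ a y ≤ β)
    (hf : ContinuousOn f (Icc 0 1))
    (hF : ∀ x, F x = ∫ t in (0:ℝ)..x, f t)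
    (hc : ∀ ε, c ε = (∫ t in (0:ℝ)..1, F t / a (t / ε)) / (∫ t in (0:ℝ)..1, 1 / a (t / ε)))
    (hastar : astar = (∫ y in (0:ℝ)..1, 1 / a y)⁻¹)
    (hc0 : c0 = ∫ t in (0:ℝ)..1, F t) :
    Tendsto
      (fun ε => sSup ((fun x => |a (x / ε) * ((c ε - F x) / a (x / ε)) -
        astar * ((c0 - F x) / astar)|) '' Icc (0:ℝ) 1))
      (nhdsWithin 0 (Ioi 0)) (nhds 0) := by
  have ha_pos : ∀ y, 0 < a y := fun y => hα.trans_le (hbd y).1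
  have hinv : Continuous fun y => 1 / a y := continuous_const.div ha fun y => (ha_pos y).ne'
  have hinv_per : Periodic (fun y => 1 / a y) 1 := fun y => by simp only [hper y]
  set m := ∫ y in (0:ℝ)..1, 1 / a y
  have hm : 0 < m := intervalIntegral_pos_of_pos (hinv.intervalIntegrable 0 1)
    (fun y => one_div_pos.2 (ha_pos y)) one_pos
  have hden : Tendsto (fun ε => ∫ t in (0:ℝ)..1, 1 / a (t / ε)) (𝓝[>] 0) (𝓝 m) := by
    simpa only [one_mul, div_one, intervalIntegral.integral_const, sub_zero, smul_eq_mul]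
      using hinv_per.tendsto_integral_mul_comp_div one_ne_zero hinv (a := 0) (b := 1)
      (φ := fun _ => 1) (φ' := 0) continuousOn_const (fun x _ => hasDerivAt_const x 1)
      intervalIntegrable_const
  have hnum : Tendsto (fun ε => ∫ t in (0:ℝ)..1, F t / a (t / ε)) (𝓝[>] 0) (𝓝 (c0 * m)) := by
    have hF_eq : F = fun x => ∫ t in (0:ℝ)..x, f t := funext hF
    have hf' : ContinuousOn f [[0, 1]] := by rwa [uIcc_of_le zero_le_one]
    rw [hc0]
    simpa only [mul_one_div, div_one] using
      hinv_per.tendsto_integral_mul_comp_div one_ne_zero hinv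
      (hF_eq ▸ continuousOn_primitive_interval hf'.integrableOn_uIcc)
      (fun x hx => hF_eq ▸ hasDerivAt_integral_of_continuousOn_Icc hf (by simpa using hx))
      hf'.intervalIntegrable
  have hc_lim : Tendsto c (𝓝[>] 0) (𝓝 c0) := by
    have h := hnum.div hden hm.ne'
    rw [mul_div_cancel_right₀ _ hm.ne'] at h
    exact h.congr fun ε => (hc ε).symm
  have hastar_ne : astar ≠ 0 := hastar ▸ inv_ne_zero hm.ne'
  have hflux : ∀ ε, (fun x => |a (x / ε) * ((c ε - F x) / a (x / ε)) -
      astar * ((c0 - F x) / astar)|) '' Icc (0:ℝ) 1 = {|c ε - c0|} := fun ε => by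
    refine Eq.trans (image_congr fun x _ => ?_) ((nonempty_Icc.2 zero_le_one).image_const _)
    rw [mul_div_cancel₀ _ (ha_pos _).ne', mul_div_cancel₀ _ hastar_ne, sub_sub_sub_cancel_right]
  simpa only [hflux, csSup_singleton, sub_self, abs_zero] using (hc_lim.sub_const c0).abs

/-- Uniform convergence of the fluxes `a(x/ε) u_ε′(x) → a* u₀′(x)` on `[0,1]` as `ε → 0⁺`. -/
theorem stmt_9 (a f F : ℝ → ℝ) (α β astar c0 : ℝ) (c : ℝ → ℝ)
    (hα : 0 < α) (hαβ : α ≤ β)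
    (ha : Continuous a) (hper : ∀ y, a (y + 1) = a y)
    (hbd : ∀ y, α ≤ a y ∧ a y ≤ β)
    (hf : ContinuousOn f (Icc 0 1))
    (hF : ∀ x, F x = ∫ t in (0:ℝ)..x, f t)
    (hc : ∀ ε, c ε = (∫ t in (0:ℝ)..1, F t / a (t / ε)) / (∫ t in (0:ℝ)..1, 1 / a (t / ε)))
    (hastar : astar = (∫ y in (0:ℝ)..1, 1 / a y)⁻¹)
    (hc0 : c0 = ∫ t in (0:ℝ)..1, F t) :
    Tendsto
      (fun ε => sSup ((fun x => |a (x / ε) * ((c ε - F x) / a (x / ε)) -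
        astar * ((c0 - F x) / astar)|) '' Icc (0:ℝ) 1))
      (nhdsWithin 0 (Ioi 0)) (nhds 0) :=
  stmt_9_general a f F α β astar c0 c hα ha hper hbd hf hF hc hastar hc0
end

section
/- Let 0 < α ≤ β and let (a_n) be a sequence of measurable functions a_n : [0,1] → ℝ with α ≤ a_n(x) ≤ β for almost every x ∈ [0,1]. Then there exist a strictly increasing function k ↦ n_k of indices and a measurable function a* : [0,1] → ℝ with α ≤ a*(x) ≤ β almost everywhere, such that for every integrable g : [0,1] → ℝ, lim_{k→∞} ∫₀¹ g(x)/a_{n_k}(x) dx = ∫₀¹ g(x)/a*(x) dx. -/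
/-!
The reciprocals `1 / a_n` are bounded in `L^∞(0,1)`, hence in the separable Hilbert space
`L²(0,1)`, where the sequential Banach–Alaoglu theorem extracts a weakly convergent subsequence
with limit `h`. Testing against indicator functions traps `h` between `1 / β` and `1 / α`, and
since the whole sequence is uniformly bounded, convergence against `L²` test functions extends to
`L¹` test functions by density of simple functions. The limit coefficient is `a* = 1 / h`.
-/

open MeasureTheory Set Filter Topology

theorem InnerProductSpace.exists_subseq_tendsto_inner {𝕜 E : Type*} [RCLike 𝕜]
    [NormedAddCommGroup E] [InnerProductSpace 𝕜 E] [CompleteSpace E]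
    [TopologicalSpace.SeparableSpace E] {x : ℕ → E} {R : ℝ} (hx : ∀ n, ‖x n‖ ≤ R) :
    ∃ φ : ℕ → ℕ, StrictMono φ ∧ ∃ y : E, ∀ z : E,
      Tendsto (fun k => inner 𝕜 (x (φ k)) z) atTop (𝓝 (inner 𝕜 y z)) := by
  let Λ : ℕ → WeakDual 𝕜 E := fun n => toDual 𝕜 E (x n)
  have hΛ : ∀ n, Λ n ∈ WeakDual.toStrongDual ⁻¹' Metric.closedBall 0 R := fun n => by
    rw [Set.mem_preimage, mem_closedBall_zero_iff]
    exact ((toDual 𝕜 E).norm_map (x n)).trans_le (hx n)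
  obtain ⟨Λ', -, φ, hφ, hlim⟩ := WeakDual.isSeqCompact_closedBall 𝕜 E 0 R hΛ
  refine ⟨φ, hφ, (toDual 𝕜 E).symm (WeakDual.toStrongDual Λ'), fun z => ?_⟩
  rw [← toDual_apply_apply, LinearIsometryEquiv.apply_symm_apply]
  exact ((WeakDual.eval_continuous z).tendsto Λ').comp hlim

section

variable {X : Type*} [MeasurableSpace X] {μ : Measure X}

theorem exists_subseq_tendsto_integral_mul_of_memLp_two [IsFiniteMeasure μ] [IsSeparable μ]
    {b : ℕ → X → ℝ} {C : ℝ} (hb : ∀ n, AEStronglyMeasurable (b n) μ)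
    (hbC : ∀ n, ∀ᵐ x ∂μ, ‖b n x‖ ≤ C) :
    ∃ φ : ℕ → ℕ, StrictMono φ ∧ ∃ h : X → ℝ, StronglyMeasurable h ∧ MemLp h 2 μ ∧
      ∀ f : X → ℝ, MemLp f 2 μ →
        Tendsto (fun k => ∫ x, f x * b (φ k) x ∂μ) atTop (𝓝 (∫ x, f x * h x ∂μ)) := by
  have hbL2 : ∀ n, MemLp (b n) 2 μ := fun n => .of_bound (hb n) C (hbC n)
  let B : ℕ → Lp ℝ 2 μ := fun n => (hbL2 n).toLp
  have hB : ∀ n, ‖B n‖ ≤ measureUnivNNReal μ ^ (2 : ENNReal).toReal⁻¹ * max C 0 := fun n =>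
    Lp.norm_le_of_ae_bound (le_max_right _ _) <| by
      filter_upwards [hbC n, (hbL2 n).coeFn_toLp] with x hx hBx
      rw [hBx]; exact hx.trans (le_max_left _ _)
  have : Fact ((2 : ENNReal) ≠ ⊤) := ⟨ENNReal.ofNat_ne_top⟩
  obtain ⟨φ, hφ, H, hH⟩ := InnerProductSpace.exists_subseq_tendsto_inner (𝕜 := ℝ) hB
  refine ⟨φ, hφ, H, Lp.stronglyMeasurable H, Lp.memLp H, fun f hf => ?_⟩
  have inner_eq : ∀ u : Lp ℝ 2 μ, inner ℝ u (hf.toLp f) = ∫ x, f x * u x ∂μ := fun u => by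
    rw [L2.inner_def]
    refine integral_congr_ae ?_
    filter_upwards [hf.coeFn_toLp] with x hx
    rw [hx, RCLike.inner_apply, conj_trivial]
  have hBφ : ∀ k, ∫ x, f x * b (φ k) x ∂μ = inner ℝ (B (φ k)) (hf.toLp f) := fun k => by
    rw [inner_eq]
    refine integral_congr_ae ?_
    filter_upwards [(hbL2 (φ k)).coeFn_toLp] with x hx
    rw [hx]
  simpa only [hBφ, inner_eq] using hH (hf.toLp f)

theorem MeasureTheory.Integrable.exists_simpleFunc_integral_norm_sub_lt {E : Type*}
    [NormedAddCommGroup E] {g : X → E} (hg : Integrable g μ) {δ : ℝ} (hδ : 0 < δ) :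
    ∃ s : SimpleFunc X E, Integrable s μ ∧ ∫ x, ‖g x - s x‖ ∂μ < δ := by
  obtain ⟨s, hgs, hs⟩ := (memLp_one_iff_integrable.2 hg).exists_simpleFunc_eLpNorm_sub_lt
    ENNReal.one_ne_top (ENNReal.ofReal_pos.2 hδ).ne'
  have hs : Integrable s μ := memLp_one_iff_integrable.1 hs
  refine ⟨s, hs, (ENNReal.ofReal_lt_ofReal_iff hδ).1 ?_⟩
  rwa [eLpNorm_one_eq_lintegral_enorm,
    ← ofReal_integral_norm_eq_lintegral_enorm (hg.sub hs)] at hgs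

theorem norm_integral_mul_sub_integral_mul_le {f g u : X → ℝ} {C : ℝ} (hf : Integrable f μ)
    (hg : Integrable g μ) (hu : AEStronglyMeasurable u μ) (huC : ∀ᵐ x ∂μ, ‖u x‖ ≤ C) :
    ‖∫ x, g x * u x ∂μ - ∫ x, f x * u x ∂μ‖ ≤ C * ∫ x, ‖g x - f x‖ ∂μ := by
  rw [← integral_sub (hg.mul_bdd hu huC) (hf.mul_bdd hu huC), ← integral_const_mul]
  refine norm_integral_le_of_norm_le ((hg.sub hf).norm.const_mul C) ?_
  filter_upwards [huC] with x hx
  rw [← sub_mul, norm_mul, mul_comm C]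
  exact mul_le_mul_of_nonneg_left hx (norm_nonneg _)

theorem tendsto_integral_mul_of_tendsto_simpleFunc {ι : Type*} {l : Filter ι}
    {u : ι → X → ℝ} {v : X → ℝ} {C : ℝ} (hu : ∀ i, AEStronglyMeasurable (u i) μ)
    (huC : ∀ i, ∀ᵐ x ∂μ, ‖u i x‖ ≤ C) (hv : AEStronglyMeasurable v μ)
    (hvC : ∀ᵐ x ∂μ, ‖v x‖ ≤ C)
    (hlim : ∀ s : SimpleFunc X ℝ, Integrable s μ →
      Tendsto (fun i => ∫ x, s x * u i x ∂μ) l (𝓝 (∫ x, s x * v x ∂μ)))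
    {g : X → ℝ} (hg : Integrable g μ) :
    Tendsto (fun i => ∫ x, g x * u i x ∂μ) l (𝓝 (∫ x, g x * v x ∂μ)) := by
  rw [Metric.tendsto_nhds]
  intro ε hε
  have hC : 0 < |C| + 1 := by positivity
  obtain ⟨s, hs, hgs⟩ := hg.exists_simpleFunc_integral_norm_sub_lt (δ := ε / (3 * (|C| + 1)))
    (by positivity)
  have close : ∀ w : X → ℝ, AEStronglyMeasurable w μ → (∀ᵐ x ∂μ, ‖w x‖ ≤ C) →
      dist (∫ x, g x * w x ∂μ) (∫ x, s x * w x ∂μ) < ε / 3 := fun w hw hwC => by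
    calc dist (∫ x, g x * w x ∂μ) (∫ x, s x * w x ∂μ)
        ≤ C * ∫ x, ‖g x - s x‖ ∂μ := norm_integral_mul_sub_integral_mul_le hs hg hw hwC
      _ ≤ (|C| + 1) * ∫ x, ‖g x - s x‖ ∂μ := mul_le_mul_of_nonneg_right
          (by linarith [le_abs_self C]) (integral_nonneg fun x => norm_nonneg _)
      _ < (|C| + 1) * (ε / (3 * (|C| + 1))) := by gcongr
      _ = ε / 3 := by field_simp
  filter_upwards [Metric.tendsto_nhds.1 (hlim s hs) (ε / 3) (by positivity)] with i hi
  calc dist (∫ x, g x * u i x ∂μ) (∫ x, g x * v x ∂μ)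
      ≤ dist (∫ x, g x * u i x ∂μ) (∫ x, s x * u i x ∂μ)
        + dist (∫ x, s x * u i x ∂μ) (∫ x, s x * v x ∂μ)
        + dist (∫ x, s x * v x ∂μ) (∫ x, g x * v x ∂μ) := dist_triangle4 _ _ _ _
    _ < ε / 3 + ε / 3 + ε / 3 := by
        gcongr
        · exact close _ (hu i) (huC i)
        · rw [dist_comm]; exact close _ hv hvC
    _ = ε := by ring

theorem ae_mem_Icc_of_tendsto_setIntegral [IsFiniteMeasure μ] {ι : Type*} {l : Filter ι}
    [l.NeBot] {b : ι → X → ℝ} {h : X → ℝ} {lb ub : ℝ} (hb : ∀ i, Integrable (b i) μ)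
    (hbd : ∀ i, ∀ᵐ x ∂μ, b i x ∈ Icc lb ub) (hh : Integrable h μ)
    (hlim : ∀ s, MeasurableSet s →
      Tendsto (fun i => ∫ x in s, b i x ∂μ) l (𝓝 (∫ x in s, h x ∂μ))) :
    ∀ᵐ x ∂μ, h x ∈ Icc lb ub := by
  have lower : (fun _ => lb) ≤ᵐ[μ] h := ae_le_of_forall_setIntegral_le (integrable_const lb) hh
    fun s hs _ => ge_of_tendsto (hlim s hs) <| .of_forall fun i =>
      setIntegral_mono_ae (integrable_const lb).integrableOn (hb i).integrableOn <|
        (hbd i).mono fun x hx => hx.1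
  have upper : h ≤ᵐ[μ] fun _ => ub := ae_le_of_forall_setIntegral_le hh (integrable_const ub)
    fun s hs _ => le_of_tendsto (hlim s hs) <| .of_forall fun i =>
      setIntegral_mono_ae (hb i).integrableOn (integrable_const ub).integrableOn <|
        (hbd i).mono fun x hx => hx.2
  filter_upwards [lower, upper] with x hl hu using ⟨hl, hu⟩

theorem integral_indicator_one_mul {s : Set X} (hs : MeasurableSet s) (f : X → ℝ) :
    ∫ x, s.indicator (fun _ => 1) x * f x ∂μ = ∫ x in s, f x ∂μ := by
  simp_rw [← indicator_mul_left, one_mul]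
  exact integral_indicator hs

theorem exists_subseq_tendsto_integral_mul [IsFiniteMeasure μ] [IsSeparable μ]
    {b : ℕ → X → ℝ} {lb ub : ℝ} (hb : ∀ n, AEStronglyMeasurable (b n) μ)
    (hbd : ∀ n, ∀ᵐ x ∂μ, b n x ∈ Icc lb ub) :
    ∃ φ : ℕ → ℕ, StrictMono φ ∧ ∃ h : X → ℝ, Measurable h ∧ (∀ᵐ x ∂μ, h x ∈ Icc lb ub) ∧
      ∀ g : X → ℝ, Integrable g μ →
        Tendsto (fun k => ∫ x, g x * b (φ k) x ∂μ) atTop (𝓝 (∫ x, g x * h x ∂μ)) := by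
  have bound : ∀ {y : ℝ}, y ∈ Icc lb ub → ‖y‖ ≤ max |lb| |ub| := fun hy =>
    abs_le_max_abs_abs hy.1 hy.2
  have hbC : ∀ n, ∀ᵐ x ∂μ, ‖b n x‖ ≤ max |lb| |ub| := fun n => (hbd n).mono fun x => bound
  obtain ⟨φ, hφ, h, hh, hhL2, hlim⟩ := exists_subseq_tendsto_integral_mul_of_memLp_two hb hbC
  have hh_bd : ∀ᵐ x ∂μ, h x ∈ Icc lb ub := by
    refine ae_mem_Icc_of_tendsto_setIntegral (l := atTop)
      (fun k => .of_bound (hb (φ k)) _ (hbC (φ k))) (fun k => hbd (φ k))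
      (hhL2.integrable one_le_two) fun s hs => ?_
    simpa only [integral_indicator_one_mul hs] using
      hlim _ (memLp_indicator_const 2 hs 1 (.inr (measure_ne_top μ s)))
  refine ⟨φ, hφ, h, hh.measurable, hh_bd, fun g hg => ?_⟩
  exact tendsto_integral_mul_of_tendsto_simpleFunc (fun k => hb (φ k)) (fun k => hbC (φ k))
    hh.aestronglyMeasurable (hh_bd.mono fun x => bound)
    (fun s _ => hlim s (s.memLp_of_isFiniteMeasure 2 μ)) hg

end

/-- 1D G-compactness: every sequence of coefficients bounded between `α` and `β` has a
subsequence whose reciprocals converge weakly-* (against all integrable functions) to the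
reciprocal of a limit coefficient again bounded between `α` and `β`. -/
theorem stmt_10 (α β : ℝ) (hα : 0 < α) (hαβ : α ≤ β) (a : ℕ → ℝ → ℝ)
    (hmeas : ∀ n, Measurable (a n))
    (hbd : ∀ n, ∀ᵐ x ∂(volume.restrict (Icc (0:ℝ) 1)), α ≤ a n x ∧ a n x ≤ β) :
    ∃ φ : ℕ → ℕ, StrictMono φ ∧ ∃ astar : ℝ → ℝ, Measurable astar ∧
      (∀ᵐ x ∂(volume.restrict (Icc (0:ℝ) 1)), α ≤ astar x ∧ astar x ≤ β) ∧
      ∀ g : ℝ → ℝ, IntegrableOn g (Icc 0 1) →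
        Tendsto (fun k => ∫ x in (0:ℝ)..1, g x / a (φ k) x) atTop
          (nhds (∫ x in (0:ℝ)..1, g x / astar x)) := by
  have hβ : 0 < β := hα.trans_le hαβ
  have hinv : ∀ n, ∀ᵐ x ∂(volume.restrict (Icc (0:ℝ) 1)), (a n x)⁻¹ ∈ Icc β⁻¹ α⁻¹ := fun n =>
    (hbd n).mono fun x hx => ⟨inv_anti₀ (hα.trans_le hx.1) hx.2, inv_anti₀ hα hx.1⟩
  obtain ⟨φ, hφ, h, hh, hh_bd, hlim⟩ :=
    exists_subseq_tendsto_integral_mul (fun n => (hmeas n).inv.aestronglyMeasurable) hinv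
  refine ⟨φ, hφ, fun x => (h x)⁻¹, hh.inv, ?_, fun g hg => ?_⟩
  · filter_upwards [hh_bd] with x hx
    have hpos : 0 < h x := (inv_pos.2 hβ).trans_le hx.1
    exact ⟨(le_inv_comm₀ hα hpos).2 hx.2, (inv_le_comm₀ hpos hβ).2 hx.1⟩
  · simp only [intervalIntegral.integral_of_le zero_le_one, ← integral_Icc_eq_integral_Ioc,
      div_eq_mul_inv, inv_inv]
    exact hlim g hg
end

section
/- Let 0 < α ≤ β, let (a_n) be a sequence of measurable functions a_n : [0,1] → ℝ with α ≤ a_n ≤ β almost everywhere, and let a* : [0,1] → ℝ be measurable with α ≤ a* ≤ β almost everywhere. Assume that for every integrable g : [0,1] → ℝ, ∫₀¹ g(x)/a_n(x) dx → ∫₀¹ g(x)/a*(x) dx as n → ∞. Let f : [0,1] → ℝ be continuous, set F(x) := ∫₀ˣ f(t) dt, and for each n define c_n := (∫₀¹ F(t)/a_n(t) dt)/(∫₀¹ 1/a_n(t) dt) and u_n(x) := ∫₀ˣ (c_n − F(t))/a_n(t) dt; define c*, u* analogously with a_n replaced by a*. Then the solutions converge uniformly: lim_{n→∞} sup_{x∈[0,1]}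 |u_n(x) − u*(x)| = 0. -/
open MeasureTheory Set Filter Topology

/-! Testing the weak-* convergence of `1 / a n` against `g · 1_{[0,x]}` gives
`∫₀ˣ g / a n → ∫₀ˣ g / a*` for every integrable `g` and every `x ∈ [0,1]`. Since
`u_b(x) = c_b ∫₀ˣ 1/b - ∫₀ˣ F/b`, this yields `c n → c*` and then `u n → u*` pointwise.
Because `c_b` is a mean of `F` with weight `1/b`, `|c n| ≤ sup |F|`, so the `u n` are
uniformly Lipschitz with constant `2 sup |F| / α`; an equicontinuous sequence converging
pointwise on the compact interval `[0,1]` converges uniformly. -/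

theorem EquicontinuousOn.tendstoUniformlyOn_of_tendsto {ι X α : Type*} [TopologicalSpace X]
    [UniformSpace α] {l : Filter ι} {G : ι → X → α} {g : X → α} {K : Set X}
    (hK : IsCompact K) (hG : EquicontinuousOn G K)
    (hpt : ∀ x ∈ K, Tendsto (G · x) l (𝓝 (g x))) :
    TendstoUniformlyOn G g l K := by
  have h : Tendsto (UniformOnFun.ofFun {K} ∘ G) l (𝓝 (UniformOnFun.ofFun {K} g)) := by
    rw [EquicontinuousOn.tendsto_uniformOnFun_iff_pi' (by simpa using hK) (by simpa using hG),
      tendsto_pi_nhds]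
    rintro ⟨x, hx⟩
    exact hpt x (by simpa using hx)
  exact UniformOnFun.tendsto_iff_tendstoUniformlyOn.mp h K rfl

theorem TendstoUniformlyOn.tendsto_sSup_image_abs_sub {ι X : Type*} {l : Filter ι}
    {G : ι → X → ℝ} {g : X → ℝ} {s : Set X} (hs : s.Nonempty) (h : TendstoUniformlyOn G g l s) :
    Tendsto (fun i => sSup ((fun x => |G i x - g x|) '' s)) l (𝓝 0) := by
  rw [Metric.tendsto_nhds]
  intro ε hε
  filter_upwards [Metric.tendstoUniformlyOn_iff.mp h (ε / 2) (half_pos hε)] with i hi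
  have hle : ∀ x ∈ s, |G i x - g x| ≤ ε / 2 := fun x hx => by
    simpa only [Real.dist_eq, abs_sub_comm] using (hi x hx).le
  have hsup_le : sSup ((fun x => |G i x - g x|) '' s) ≤ ε / 2 :=
    csSup_le (hs.image _) (forall_mem_image.mpr hle)
  obtain ⟨x₀, hx₀⟩ := hs
  have hsup_nonneg : 0 ≤ sSup ((fun x => |G i x - g x|) '' s) :=
    le_csSup_of_le ⟨ε / 2, forall_mem_image.mpr hle⟩ (mem_image_of_mem _ hx₀) (abs_nonneg _)
  rw [Real.dist_eq, sub_zero, abs_of_nonneg hsup_nonneg]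
  linarith

theorem integrable_div_of_le {X : Type*} [MeasurableSpace X] {μ : Measure X} {g b : X → ℝ}
    {α : ℝ} (hα : 0 < α) (hg : Integrable g μ) (hb : AEMeasurable b μ)
    (hbα : ∀ᵐ x ∂μ, α ≤ b x) :
    Integrable (fun x => g x / b x) μ := by
  simp_rw [div_eq_mul_inv]
  refine hg.mul_bdd hb.inv.aestronglyMeasurable (c := α⁻¹) ?_
  filter_upwards [hbα] with x hx
  rw [norm_inv, Real.norm_of_nonneg (hα.le.trans hx)]
  exact inv_anti₀ hα hx

theorem intervalIntegrable_div_of_le {g b : ℝ → ℝ} {α p q x : ℝ} (hα : 0 < α)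
    (hg : IntegrableOn g (Icc p q)) (hb : Measurable b)
    (hbα : ∀ᵐ t ∂volume.restrict (Icc p q), α ≤ b t) (hx : x ∈ Icc p q) :
    IntervalIntegrable (fun t => g t / b t) volume p x :=
  (IntegrableOn.mono_set (integrable_div_of_le hα hg hb.aemeasurable hbα)
    (uIcc_subset_Icc (left_mem_Icc.mpr (hx.1.trans hx.2)) hx)).intervalIntegrable

theorem intervalIntegral_const_sub_div (F b : ℝ → ℝ) (c : ℝ) {x y : ℝ}
    (h1 : IntervalIntegrable (fun t => 1 / b t) volume x y)
    (hF : IntervalIntegrable (fun t => F t / b t) volume x y) :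
    ∫ t in x..y, (c - F t) / b t = c * (∫ t in x..y, 1 / b t) - ∫ t in x..y, F t / b t := by
  simp_rw [sub_div, ← mul_one_div c]
  rw [intervalIntegral.integral_sub (h1.const_mul c) hF, intervalIntegral.integral_const_mul]

theorem lipschitzOnWith_primitive {φ : ℝ → ℝ} {p q L : ℝ} (hφ : IntegrableOn φ (Icc p q))
    (hL : ∀ᵐ t ∂volume.restrict (Icc p q), |φ t| ≤ L) :
    LipschitzOnWith (Real.toNNReal L) (fun x => ∫ t in p..x, φ t) (Icc p q) := by
  refine LipschitzOnWith.of_dist_le' fun x hx y hy => ?_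
  have hp : p ∈ Icc p q := left_mem_Icc.mpr (hx.1.trans hx.2)
  rw [Real.dist_eq, Real.dist_eq, intervalIntegral.integral_interval_sub_left
    (hφ.mono_set (uIcc_subset_Icc hp hx)).intervalIntegrable
    (hφ.mono_set (uIcc_subset_Icc hp hy)).intervalIntegrable]
  have hbound : ∀ᵐ t, t ∈ uIoc y x → ‖φ t‖ ≤ L := by
    filter_upwards [(ae_restrict_iff' measurableSet_Icc).mp hL] with t ht htyx
    exact ht (Ioc_subset_Icc_self.trans (uIcc_subset_Icc hy hx) htyx)
  simpa only [Real.norm_eq_abs] using intervalIntegral.norm_integral_le_of_norm_le_const_ae hbound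

theorem lipschitzOnWith_primitive_div {g b : ℝ → ℝ} {α G p q : ℝ} (hα : 0 < α)
    (hg : IntegrableOn g (Icc p q)) (hgG : ∀ t ∈ Icc p q, |g t| ≤ G) (hb : Measurable b)
    (hbα : ∀ᵐ t ∂volume.restrict (Icc p q), α ≤ b t) :
    LipschitzOnWith (Real.toNNReal (G / α)) (fun x => ∫ t in p..x, g t / b t) (Icc p q) := by
  refine lipschitzOnWith_primitive (integrable_div_of_le hα hg hb.aemeasurable hbα) ?_
  filter_upwards [hbα, ae_restrict_mem measurableSet_Icc] with t hbt ht
  rw [abs_div, abs_of_pos (hα.trans_le hbt)]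
  exact div_le_div₀ ((abs_nonneg _).trans (hgG t ht)) (hgG t ht) hα hbt

theorem intervalIntegral_one_div_pos {b : ℝ → ℝ} {α β p q : ℝ} (hα : 0 < α) (hαβ : α ≤ β)
    (hpq : p < q) (hb : Measurable b)
    (hbd : ∀ᵐ t ∂volume.restrict (Icc p q), α ≤ b t ∧ b t ≤ β) :
    0 < ∫ t in p..q, 1 / b t := by
  have hint : IntervalIntegrable (fun t => 1 / b t) volume p q :=
    intervalIntegrable_div_of_le hα continuousOn_const.integrableOn_Icc hb
      (hbd.mono fun _ => And.left) (right_mem_Icc.mpr hpq.le)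
  calc 0 < (q - p) * (1 / β) := by have := hα.trans_le hαβ; positivity
    _ = ∫ _ in p..q, 1 / β := by simp
    _ ≤ ∫ t in p..q, 1 / b t := by
      refine intervalIntegral.integral_mono_ae_restrict hpq.le intervalIntegrable_const hint ?_
      filter_upwards [hbd] with t ht
      exact one_div_le_one_div_of_le (hα.trans_le ht.1) ht.2

theorem abs_intervalIntegral_div_div_le {F b : ℝ → ℝ} {α M p q : ℝ} (hpq : p ≤ q)
    (hα : 0 < α) (hb : Measurable b) (hbα : ∀ᵐ t ∂volume.restrict (Icc p q), α ≤ b t)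
    (hFM : ∀ t ∈ Icc p q, |F t| ≤ M) (hpos : 0 < ∫ t in p..q, 1 / b t) :
    |(∫ t in p..q, F t / b t) / ∫ t in p..q, 1 / b t| ≤ M := by
  rw [abs_div, abs_of_pos hpos, div_le_iff₀ hpos, ← intervalIntegral.integral_const_mul]
  have hbound : ∀ᵐ t, t ∈ Ioc p q → ‖F t / b t‖ ≤ M * (1 / b t) := by
    filter_upwards [(ae_restrict_iff' measurableSet_Icc).mp hbα] with t hbt ht
    have hbt := hα.trans_le (hbt (Ioc_subset_Icc_self ht))
    rw [Real.norm_eq_abs, abs_div, abs_of_pos hbt, mul_one_div]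
    exact div_le_div_of_nonneg_right (hFM t (Ioc_subset_Icc_self ht)) hbt.le
  have hint : IntervalIntegrable (fun t => 1 / b t) volume p q :=
    intervalIntegrable_div_of_le hα continuousOn_const.integrableOn_Icc hb hbα
      (right_mem_Icc.mpr hpq)
  simpa only [Real.norm_eq_abs] using
    intervalIntegral.norm_integral_le_of_norm_le hpq hbound (hint.const_mul M)

section WeakStarConvergence

variable {ι : Type*} {l : Filter ι} {a : ι → ℝ → ℝ} {astar : ℝ → ℝ} {p q : ℝ}

theorem tendsto_intervalIntegral_div_of_mem_Icc
    (hweak : ∀ g : ℝ → ℝ, IntegrableOn g (Icc p q) →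
      Tendsto (fun n => ∫ t in p..q, g t / a n t) l (𝓝 (∫ t in p..q, g t / astar t)))
    {g : ℝ → ℝ} (hg : IntegrableOn g (Icc p q)) {x : ℝ} (hx : x ∈ Icc p q) :
    Tendsto (fun n => ∫ t in p..x, g t / a n t) l (𝓝 (∫ t in p..x, g t / astar t)) := by
  have hcut : ∀ b : ℝ → ℝ,
      ∫ t in p..q, (Iic x).indicator g t / b t = ∫ t in p..x, g t / b t := fun b => by
    rw [← intervalIntegral.integral_indicator hx]
    congr 1 with t
    by_cases ht : t ≤ x <;> simp [ht]
  simpa only [hcut] using hweak _ (hg.indicator (measurableSet_Iic (a := x)))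

theorem tendsto_intervalIntegral_const_sub_div {α : ℝ} (hα : 0 < α)
    (ha : ∀ n, Measurable (a n)) (haα : ∀ n, ∀ᵐ t ∂volume.restrict (Icc p q), α ≤ a n t)
    (hastar : Measurable astar) (hastarα : ∀ᵐ t ∂volume.restrict (Icc p q), α ≤ astar t)
    (hweak : ∀ g : ℝ → ℝ, IntegrableOn g (Icc p q) →
      Tendsto (fun n => ∫ t in p..q, g t / a n t) l (𝓝 (∫ t in p..q, g t / astar t)))
    {F : ℝ → ℝ} (hF : IntegrableOn F (Icc p q)) {c : ι → ℝ} {cstar : ℝ}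
    (hc : Tendsto c l (𝓝 cstar)) {x : ℝ} (hx : x ∈ Icc p q) :
    Tendsto (fun n => ∫ t in p..x, (c n - F t) / a n t) l
      (𝓝 (∫ t in p..x, (cstar - F t) / astar t)) := by
  have h1 : IntegrableOn (fun _ => (1 : ℝ)) (Icc p q) := continuousOn_const.integrableOn_Icc
  have hsplit : ∀ b : ℝ → ℝ, Measurable b → (∀ᵐ t ∂volume.restrict (Icc p q), α ≤ b t) →
      ∀ c, ∫ t in p..x, (c - F t) / b t
        = c * (∫ t in p..x, 1 / b t) - ∫ t in p..x, F t / b t := fun b hb hbα c =>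
    intervalIntegral_const_sub_div F b c (intervalIntegrable_div_of_le hα h1 hb hbα hx)
      (intervalIntegrable_div_of_le hα hF hb hbα hx)
  simp only [hsplit _ (ha _) (haα _), hsplit astar hastar hastarα]
  exact (hc.mul (tendsto_intervalIntegral_div_of_mem_Icc hweak h1 hx)).sub
    (tendsto_intervalIntegral_div_of_mem_Icc hweak hF hx)

end WeakStarConvergence

/-- G-convergence implies uniform convergence of the solutions of the associated 1D
Dirichlet problems. -/
theorem stmt_11 (α β : ℝ) (hα : 0 < α) (hαβ : α ≤ β)
    (a : ℕ → ℝ → ℝ) (astar : ℝ → ℝ)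
    (hmeas : ∀ n, Measurable (a n)) (hmeas' : Measurable astar)
    (hbd : ∀ n, ∀ᵐ x ∂(volume.restrict (Icc (0:ℝ) 1)), α ≤ a n x ∧ a n x ≤ β)
    (hbd' : ∀ᵐ x ∂(volume.restrict (Icc (0:ℝ) 1)), α ≤ astar x ∧ astar x ≤ β)
    (hweak : ∀ g : ℝ → ℝ, IntegrableOn g (Icc 0 1) →
      Tendsto (fun n => ∫ x in (0:ℝ)..1, g x / a n x) atTop
        (nhds (∫ x in (0:ℝ)..1, g x / astar x)))
    (f F : ℝ → ℝ) (hf : ContinuousOn f (Icc 0 1))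
    (hF : ∀ x, F x = ∫ t in (0:ℝ)..x, f t)
    (c : ℕ → ℝ)
    (hc : ∀ n, c n = (∫ t in (0:ℝ)..1, F t / a n t) / (∫ t in (0:ℝ)..1, 1 / a n t))
    (u : ℕ → ℝ → ℝ) (hu : ∀ n x, u n x = ∫ t in (0:ℝ)..x, (c n - F t) / a n t)
    (cstar : ℝ)
    (hcstar : cstar = (∫ t in (0:ℝ)..1, F t / astar t) / (∫ t in (0:ℝ)..1, 1 / astar t))
    (ustar : ℝ → ℝ) (hustar : ∀ x, ustar x = ∫ t in (0:ℝ)..x, (cstar - F t) / astar t) :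
    Tendsto (fun n => sSup ((fun x => |u n x - ustar x|) '' Icc (0:ℝ) 1))
      atTop (nhds 0) := by
  have haα n : ∀ᵐ t ∂volume.restrict (Icc (0:ℝ) 1), α ≤ a n t := (hbd n).mono fun _ => And.left
  have hFcont : ContinuousOn F (Icc 0 1) := by
    rw [show F = _ from funext hF, ← uIcc_of_le zero_le_one]
    exact intervalIntegral.continuousOn_primitive_interval
      (by rw [uIcc_of_le zero_le_one]; exact hf.integrableOn_Icc)
  obtain ⟨M, hM⟩ := isCompact_Icc.exists_bound_of_continuousOn hFcont
  simp only [Real.norm_eq_abs] at hM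
  have hFint : IntegrableOn F (Icc 0 1) := hFcont.integrableOn_Icc
  have hone : IntegrableOn (fun _ : ℝ => (1 : ℝ)) (Icc 0 1) := continuousOn_const.integrableOn_Icc
  have hc_le n : |c n| ≤ M := hc n ▸ abs_intervalIntegral_div_div_le zero_le_one hα (hmeas n)
    (haα n) hM (intervalIntegral_one_div_pos hα hαβ zero_lt_one (hmeas n) (hbd n))
  have hcc : Tendsto c atTop (𝓝 cstar) := by
    rw [show c = _ from funext hc, hcstar]
    exact (tendsto_intervalIntegral_div_of_mem_Icc hweak hFint (right_mem_Icc.mpr zero_le_one)).div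
      (tendsto_intervalIntegral_div_of_mem_Icc hweak hone (right_mem_Icc.mpr zero_le_one))
      (intervalIntegral_one_div_pos hα hαβ zero_lt_one hmeas' hbd').ne'
  have hlip n : LipschitzOnWith (Real.toNNReal (2 * M / α)) (u n) (Icc 0 1) := by
    rw [show u n = _ from funext (hu n)]
    refine lipschitzOnWith_primitive_div hα (continuousOn_const.sub hFcont).integrableOn_Icc
      (fun t ht => ?_) (hmeas n) (haα n)
    linarith [abs_sub (c n) (F t), hc_le n, hM t ht]
  have hpt : ∀ x ∈ Icc (0:ℝ) 1, Tendsto (u · x) atTop (𝓝 (ustar x)) := fun x hx => by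
    simp only [hu, hustar]
    exact tendsto_intervalIntegral_const_sub_div hα hmeas haα hmeas' (hbd'.mono fun _ => And.left)
      hweak hFint hcc hx
  exact ((LipschitzOnWith.uniformEquicontinuousOn u _ hlip).equicontinuousOn
    |>.tendstoUniformlyOn_of_tendsto isCompact_Icc hpt).tendsto_sSup_image_abs_sub
      (nonempty_Icc.mpr zero_le_one)
end

section
/- For ε > 0 define the coefficient A^ε(x) := ∫₀¹ (1 + (1/2) sin((y + (1/(2ε)) sin(π√(2/ε) x))²)) e^{y(1 + sin x)} dy for x ∈ [0,1]. Then A^ε converges weakly in L²(0,1), as ε → 0⁺, to A*(x) := (e^{1 + sin x} − 1)/(1 + sin x); that is, for every continuous φ : [0,1] → ℝ, lim_{ε→0⁺} ∫₀¹ A^ε(x) φ(x) dx = ∫₀¹ ((e^{1 + sin x} − 1)/(1 + sin x)) φ(x) dx. -/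
/-!
With `s = 1 + sin x` and `c = sin (π √(2/ε) x) / (2ε)` one has
`A^ε(x) = (e^s - 1)/s + chirp c s / 2`, where `chirp c s = ∫₀¹ sin ((y + c)²) e^{ys} dy`.
The chirp integral is bounded, and integration by parts against `d/dy cos ((y + c)²)` shows it is
`O(1/|c|)`. Now `|c| ≥ 1 / (2√ε)` except where `|sin (π √(2/ε) x)| < √ε`, and that set has measure
`O(√ε)` once the frequency exceeds `2π`. Hence `∫₀¹ |A^ε - A*| = O(√ε)`, which gives the weak limit.
-/

open MeasureTheory Set Filter Real
open scoped Topology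

lemma abs_le_two_mul_abs_add {y c : ℝ} (hy : y ∈ Icc (0:ℝ) 1) (hc : 2 ≤ |c|) :
    |c| ≤ 2 * |y + c| := by
  have : |c| ≤ |y + c| + |y| := by simpa using abs_sub (y + c) y
  rw [abs_of_nonneg hy.1] at this
  linarith [hy.2]

/-- Integration by parts against `(-cos ((y + c)²))' = 2 (y + c) sin ((y + c)²)`. -/
theorem integral_sin_sq_mul_eq {w w' : ℝ → ℝ} {c : ℝ} (hc : ∀ y ∈ Icc (0:ℝ) 1, y + c ≠ 0)
    (hw : ∀ y ∈ Icc (0:ℝ) 1, HasDerivAt w (w' y) y) (hw' : IntervalIntegrable w' volume 0 1) :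
    ∫ y in (0:ℝ)..1, sin ((y + c) ^ 2) * w y
      = w 0 / (2 * c) * cos (c ^ 2) - w 1 / (2 * (1 + c)) * cos ((1 + c) ^ 2)
        + ∫ y in (0:ℝ)..1,
            (w' y / (2 * (y + c)) - w y / (2 * (y + c) ^ 2)) * cos ((y + c) ^ 2) := by
  have hI : uIcc (0:ℝ) 1 = Icc 0 1 := uIcc_of_le zero_le_one
  set u' : ℝ → ℝ := fun y => w' y / (2 * (y + c)) - w y / (2 * (y + c) ^ 2)
  have hu : ∀ y ∈ uIcc (0:ℝ) 1, HasDerivAt (fun y => w y / (2 * (y + c))) (u' y) y := by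
    rw [hI]
    intro y hy
    have h2 : HasDerivAt (fun y => 2 * (y + c)) 2 y := by
      simpa using ((hasDerivAt_id y).add_const c).const_mul 2
    have := hc y hy
    refine ((hw y hy).div h2 (by simpa using this)).congr_deriv ?_
    simp only [u']
    field_simp
  have hv : ∀ y ∈ uIcc (0:ℝ) 1,
      HasDerivAt (fun y => -cos ((y + c) ^ 2)) (sin ((y + c) ^ 2) * (2 * (y + c))) y := by
    intro y _
    refine ((((hasDerivAt_id' y).add_const c).fun_pow 2).cos.fun_neg).congr_deriv ?_
    simp only [Nat.cast_ofNat]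
    ring
  have hu' : IntervalIntegrable u' volume 0 1 := by
    have hcont : ContinuousOn (fun y => 2 * (y + c)) (uIcc 0 1) := by fun_prop
    have hwc : ContinuousOn w (uIcc 0 1) := fun y hy =>
      (hw y (hI ▸ hy)).continuousAt.continuousWithinAt
    refine (hw'.mul_continuousOn (hcont.inv₀ ?_)).sub (ContinuousOn.intervalIntegrable
      (hwc.div (by fun_prop : ContinuousOn (fun y => 2 * (y + c) ^ 2) (uIcc 0 1)) ?_)) <;>
    · intro y hy; have := hc y (hI ▸ hy); positivity
  have hibp := intervalIntegral.integral_mul_deriv_eq_deriv_mul hu hv hu'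
    ((by fun_prop : Continuous fun y => sin ((y + c) ^ 2) * (2 * (y + c))).intervalIntegrable 0 1)
  have hcongr : ∫ y in (0:ℝ)..1, sin ((y + c) ^ 2) * w y
      = ∫ y in (0:ℝ)..1, w y / (2 * (y + c)) * (sin ((y + c) ^ 2) * (2 * (y + c))) := by
    refine intervalIntegral.integral_congr fun y hy => ?_
    have := hc y (hI ▸ hy)
    field_simp
  rw [hcongr, hibp]
  simp only [mul_neg, intervalIntegral.integral_neg, zero_add]
  ring

theorem abs_integral_sin_sq_mul_le {w w' : ℝ → ℝ} {c W : ℝ} (hc : 2 ≤ |c|)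
    (hw : ∀ y ∈ Icc (0:ℝ) 1, HasDerivAt w (w' y) y) (hw' : IntervalIntegrable w' volume 0 1)
    (hwW : ∀ y ∈ Icc (0:ℝ) 1, |w y| ≤ W) (hw'W : ∀ y ∈ Icc (0:ℝ) 1, |w' y| ≤ W) :
    |∫ y in (0:ℝ)..1, sin ((y + c) ^ 2) * w y| ≤ 4 * W / |c| := by
  have hc0 : 0 < |c| := by linarith
  have hW : 0 ≤ W := (abs_nonneg _).trans (hwW 0 (by simp))
  have hyc : ∀ y ∈ Icc (0:ℝ) 1, |c| ≤ 2 * |y + c| := fun y hy => abs_le_two_mul_abs_add hy hc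
  have hne : ∀ y ∈ Icc (0:ℝ) 1, y + c ≠ 0 := fun y hy h => by
    have := hyc y hy; rw [h, abs_zero] at this; linarith
  have hboundary : ∀ y ∈ Icc (0:ℝ) 1, |w y / (2 * (y + c)) * cos ((y + c) ^ 2)| ≤ W / |c| := by
    intro y hy
    rw [abs_mul, abs_div, abs_mul, abs_two]
    exact mul_le_of_le_one_right (by positivity) (abs_cos_le_one _) |>.trans
      (div_le_div₀ hW (hwW y hy) hc0 (hyc y hy))
  have hinterior : ∀ y ∈ Icc (0:ℝ) 1,
      |(w' y / (2 * (y + c)) - w y / (2 * (y + c) ^ 2)) * cos ((y + c) ^ 2)| ≤ 2 * W / |c| := by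
    intro y hy
    have h1 : 1 ≤ |y + c| := by linarith [hyc y hy]
    have h2 : |c| ≤ 2 * |y + c| ^ 2 := by nlinarith [hyc y hy]
    rw [abs_mul]
    refine (mul_le_of_le_one_right (abs_nonneg _) (abs_cos_le_one _)).trans ?_
    calc _ ≤ |w' y| / (2 * |y + c|) + |w y| / (2 * |y + c| ^ 2) := by
          refine (abs_sub _ _).trans_eq ?_
          simp only [abs_div, abs_mul, abs_two, abs_pow]
      _ ≤ W / |c| + W / |c| := by
          gcongr ?_ + ?_
          exacts [div_le_div₀ hW (hw'W y hy) hc0 (hyc y hy), div_le_div₀ hW (hwW y hy) hc0 h2]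
      _ = 2 * W / |c| := by ring
  have hintegral : ‖∫ y in (0:ℝ)..1,
      (w' y / (2 * (y + c)) - w y / (2 * (y + c) ^ 2)) * cos ((y + c) ^ 2)‖
        ≤ 2 * W / |c| * |1 - 0| :=
    intervalIntegral.norm_integral_le_of_norm_le_const fun y hy =>
      hinterior y (Ioc_subset_Icc_self ((uIoc_of_le (zero_le_one (α := ℝ))) ▸ hy))
  rw [integral_sin_sq_mul_eq hne hw hw']
  have h0 := hboundary 0 (by simp)
  have h1 := hboundary 1 (by simp)
  simp only [zero_add, sub_zero, abs_one, mul_one, Real.norm_eq_abs] at h0 hintegral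
  calc _ ≤ W / |c| + W / |c| + 2 * W / |c| :=
        (abs_add_le _ _).trans (add_le_add ((abs_sub _ _).trans (add_le_add h0 h1)) hintegral)
    _ = 4 * W / |c| := by ring

noncomputable def chirp (c s : ℝ) : ℝ := ∫ y in (0:ℝ)..1, sin ((y + c) ^ 2) * exp (y * s)

lemma exp_mul_le_eight {y s : ℝ} (hy : y ∈ Icc (0:ℝ) 1) (hs : s ≤ 2) : exp (y * s) ≤ 8 := by
  have h2 : exp 2 ≤ 8 := by
    have : exp 2 = exp 1 * exp 1 := by rw [← exp_add]; norm_num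
    nlinarith [exp_one_lt_d9, exp_pos 1]
  exact (exp_le_exp.2 (by nlinarith [hy.1, hy.2])).trans h2

lemma abs_chirp_le {c s : ℝ} (hs : s ≤ 2) : |chirp c s| ≤ 8 := by
  calc ‖chirp c s‖ ≤ 8 * |(1:ℝ) - 0| :=
        intervalIntegral.norm_integral_le_of_norm_le_const fun y hy => ?_
    _ = 8 := by simp
  rw [uIoc_of_le zero_le_one] at hy
  rw [norm_mul, norm_eq_abs, norm_eq_abs, abs_of_pos (exp_pos _)]
  nlinarith [abs_sin_le_one ((y + c) ^ 2), abs_nonneg (sin ((y + c) ^ 2)), exp_pos (y * s),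
    exp_mul_le_eight (Ioc_subset_Icc_self hy) hs]

lemma abs_chirp_le_of_two_le {c s : ℝ} (hc : 2 ≤ |c|) (hs : |s| ≤ 2) :
    |chirp c s| ≤ 64 / |c| := by
  have hexp := fun y (hy : y ∈ Icc (0:ℝ) 1) => exp_mul_le_eight hy (le_of_abs_le hs)
  calc |chirp c s| ≤ 4 * 16 / |c| := by
        refine abs_integral_sin_sq_mul_le (w' := fun y => s * exp (y * s)) hc
          (fun y _ => ?_) ((by fun_prop : Continuous _).intervalIntegrable 0 1)
          (fun y hy => ?_) (fun y hy => ?_)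
        · simpa [mul_comm] using ((hasDerivAt_id y).mul_const s).exp
        · rw [abs_of_pos (exp_pos _)]; linarith [hexp y hy]
        · rw [abs_mul, abs_of_pos (exp_pos _)]
          nlinarith [hexp y hy, abs_nonneg s, exp_pos (y * s)]
    _ = 64 / |c| := by norm_num

theorem Continuous.chirp {α : Type*} [TopologicalSpace α] {c s : α → ℝ} (hc : Continuous c)
    (hs : Continuous s) : Continuous fun x => chirp (c x) (s x) :=
  intervalIntegral.continuous_parametric_intervalIntegral_of_continuous' (by fun_prop) 0 1

lemma integral_exp_mul {s : ℝ} (hs : s ≠ 0) : ∫ y in (0:ℝ)..1, exp (y * s) = (exp s - 1) / s := by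
  rw [intervalIntegral.integral_comp_mul_right exp hs, integral_exp]
  simp [div_eq_inv_mul]

lemma integral_one_add_half_sin_sq_mul_exp (c : ℝ) {s : ℝ} (hs : s ≠ 0) :
    ∫ y in (0:ℝ)..1, (1 + (1 / 2) * sin ((y + c) ^ 2)) * exp (y * s)
      = (exp s - 1) / s + chirp c s / 2 := by
  simp only [add_mul, one_mul, mul_assoc]
  rw [intervalIntegral.integral_add
    ((by fun_prop : Continuous fun y => exp (y * s)).intervalIntegrable 0 1)
    ((by fun_prop : Continuous fun y => (1 / 2) * (sin ((y + c) ^ 2) * exp (y * s))).intervalIntegrable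
      0 1),
    intervalIntegral.integral_const_mul, integral_exp_mul hs, chirp]
  ring

lemma mul_abs_sub_le_abs_sin {t : ℝ} {k : ℤ} (hk : |t - k * π| ≤ π / 2) :
    2 / π * |t - k * π| ≤ |sin t| := by
  calc 2 / π * |t - k * π| ≤ |sin (t - k * π)| := mul_abs_le_abs_sin hk
    _ = |sin t| := by rw [sin_sub_int_mul_pi, abs_mul, abs_neg_one_zpow, one_mul]

/-- `|sin (N x)| < δ` forces `N x` to within `π δ / 2` of one of the at most `N / π + 3 / 2`
multiples of `π` in `[0, N + π / 2]`. -/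
theorem volume_abs_sin_mul_lt_le {N δ : ℝ} (hN : 2 * π ≤ N) (hδ : 0 < δ) :
    volume (Icc (0:ℝ) 1 ∩ {x | |sin (N * x)| < δ}) ≤ ENNReal.ofReal (2 * δ) := by
  have hN0 : 0 < N := by linarith [pi_pos]
  set n := ⌊N / π + 1 / 2⌋₊ + 1
  set I : ℕ → Set ℝ := fun k => Ioo ((k * π - π * δ / 2) / N) ((k * π + π * δ / 2) / N)
  have hcover : Icc (0:ℝ) 1 ∩ {x | |sin (N * x)| < δ} ⊆ ⋃ k ∈ Finset.range n, I k := by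
    rintro x ⟨hx, hsin⟩
    set k := ⌊N * x / π + 1 / 2⌋₊
    have hNx : 0 ≤ N * x := mul_nonneg hN0.le hx.1
    have hk_le : (k : ℝ) ≤ N * x / π + 1 / 2 := Nat.floor_le (by positivity)
    have hk_gt : N * x / π + 1 / 2 < k + 1 := Nat.lt_floor_add_one _
    have hdist : |N * x - ((k : ℤ) : ℝ) * π| ≤ π / 2 := by
      rw [Int.cast_natCast, abs_le]
      constructor <;> nlinarith [pi_pos, mul_div_cancel₀ (N * x) pi_pos.ne']
    have hclose : |N * x - k * π| < π * δ / 2 := by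
      have := (mul_abs_sub_le_abs_sin hdist).trans_lt hsin
      rw [Int.cast_natCast] at this
      rw [div_mul_eq_mul_div, div_lt_iff₀ pi_pos] at this
      linarith
    refine mem_biUnion (x := k) (Finset.mem_range_succ_iff.2 (Nat.floor_le_floor ?_)) ?_
    · have : N * x ≤ N := by nlinarith [hx.2]
      gcongr
    · obtain ⟨h1, h2⟩ := abs_lt.1 hclose
      constructor
      · rw [div_lt_iff₀ hN0]; linarith
      · rw [lt_div_iff₀ hN0]; linarith
  have hn : (n : ℝ) ≤ N / π + 3 / 2 := by
    have : (⌊N / π + 1 / 2⌋₊ : ℝ) ≤ N / π + 1 / 2 := Nat.floor_le (by positivity)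
    push_cast [n]
    linarith
  calc volume (Icc (0:ℝ) 1 ∩ {x | |sin (N * x)| < δ})
      ≤ ∑ k ∈ Finset.range n, volume (I k) :=
        (measure_mono hcover).trans (measure_biUnion_finset_le _ _)
    _ = ∑ k ∈ Finset.range n, ENNReal.ofReal (π * δ / N) := by
        refine Finset.sum_congr rfl fun k _ => ?_
        rw [Real.volume_Ioo]
        congr 1
        ring
    _ = ENNReal.ofReal (n * (π * δ / N)) := by
        rw [Finset.sum_const, Finset.card_range, nsmul_eq_mul, ENNReal.ofReal_mul (by positivity),
          ENNReal.ofReal_natCast]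
    _ ≤ ENNReal.ofReal (2 * δ) := by
        refine ENNReal.ofReal_le_ofReal ?_
        calc (n : ℝ) * (π * δ / N) ≤ (N / π + 3 / 2) * (π * δ / N) := by gcongr
          _ = δ + 3 / 2 * π / N * δ := by field_simp
          _ ≤ δ + 1 * δ := by
              gcongr
              rw [div_le_one hN0]; linarith [pi_pos]
          _ = 2 * δ := by ring

theorem abs_integral_mul_le_of_abs_le_off {f φ : ℝ → ℝ} {B : Set ℝ} {K η β M : ℝ}
    (hB : MeasurableSet B) (hβ : 0 ≤ β) (hBvol : volume (Icc (0:ℝ) 1 ∩ B) ≤ ENNReal.ofReal β)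
    (hfK : ∀ x ∈ Icc (0:ℝ) 1, |f x| ≤ K) (hη : 0 ≤ η)
    (hfη : ∀ x ∈ Icc (0:ℝ) 1, x ∉ B → |f x| ≤ η) (hφ : ∀ x ∈ Icc (0:ℝ) 1, |φ x| ≤ M) :
    |∫ x in (0:ℝ)..1, f x * φ x| ≤ M * (K * β + η) := by
  have hM : 0 ≤ M := (abs_nonneg _).trans (hφ 0 (by simp))
  have hK : 0 ≤ K := (abs_nonneg _).trans (hfK 0 (by simp))
  have hind : IntervalIntegrable (B.indicator (1 : ℝ → ℝ)) volume (0:ℝ) 1 := by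
    rw [intervalIntegrable_iff]
    exact (integrableOn_const measure_Ioc_lt_top.ne).indicator hB
  have hvol : ∫ x in (0:ℝ)..1, B.indicator (1 : ℝ → ℝ) x ≤ β := by
    rw [intervalIntegral.integral_of_le zero_le_one, integral_indicator_one hB,
      measureReal_restrict_apply hB]
    refine ENNReal.toReal_le_of_le_ofReal hβ ((measure_mono ?_).trans hBvol)
    exact fun x hx => ⟨Ioc_subset_Icc_self hx.2, hx.1⟩
  have hind0 : ∀ x, 0 ≤ B.indicator (1 : ℝ → ℝ) x := indicator_nonneg fun _ _ => zero_le_one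
  have hpt : ∀ x ∈ Icc (0:ℝ) 1, |f x * φ x| ≤ M * (K * B.indicator (1 : ℝ → ℝ) x + η) := by
    intro x hx
    rw [abs_mul, mul_comm M]
    refine mul_le_mul ?_ (hφ x hx) (abs_nonneg _) (add_nonneg (mul_nonneg hK (hind0 x)) hη)
    by_cases hxB : x ∈ B
    · simpa [hxB] using (hfK x hx).trans (le_add_of_nonneg_right hη)
    · simpa [hxB] using hfη x hx hxB
  calc ‖∫ x in (0:ℝ)..1, f x * φ x‖
      ≤ ∫ x in (0:ℝ)..1, M * (K * B.indicator (1 : ℝ → ℝ) x + η) :=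
        intervalIntegral.norm_integral_le_of_norm_le zero_le_one
          (ae_of_all _ fun x hx => hpt x (Ioc_subset_Icc_self hx))
          ((hind.const_mul K).add intervalIntegrable_const |>.const_mul M)
    _ = M * (K * (∫ x in (0:ℝ)..1, B.indicator (1 : ℝ → ℝ) x) + η) := by
        rw [intervalIntegral.integral_const_mul, intervalIntegral.integral_add (hind.const_mul K)
          intervalIntegrable_const, intervalIntegral.integral_const_mul]
        simp
    _ ≤ M * (K * β + η) := by gcongr

/-- Off the set where `|sin (N x)| < a^{-1/2}`, whose measure is `O(a^{-1/2})`, the chirp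
parameter `a sin (N x)` has size at least `√a`. -/
theorem abs_integral_chirp_mul_le {s φ : ℝ → ℝ} {a N M : ℝ} (ha : 4 ≤ a) (hN : 2 * π ≤ N)
    (hs : ∀ x ∈ Icc (0:ℝ) 1, |s x| ≤ 2) (hφ : ∀ x ∈ Icc (0:ℝ) 1, |φ x| ≤ M) :
    |∫ x in (0:ℝ)..1, chirp (a * sin (N * x)) (s x) * φ x| ≤ M * (80 / √a) := by
  have ha0 : 0 < a := by linarith
  have hsa : 2 ≤ √a := le_sqrt_of_sq_le (by linarith)
  have hδ : 0 < 1 / √a := by positivity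
  have hB : MeasurableSet {x : ℝ | |sin (N * x)| < 1 / √a} :=
    measurableSet_lt (by fun_prop) measurable_const
  calc _ ≤ M * (8 * (2 * (1 / √a)) + 64 / √a) :=
        abs_integral_mul_le_of_abs_le_off hB (by positivity) (volume_abs_sin_mul_lt_le hN hδ)
          (fun x hx => abs_chirp_le (le_of_abs_le (hs x hx))) (by positivity) ?_ hφ
    _ = M * (80 / √a) := by ring
  intro x hx hxB
  have hsin : 1 / √a ≤ |sin (N * x)| := not_lt.1 hxB
  have hc : √a ≤ |a * sin (N * x)| := by
    rw [abs_mul, abs_of_pos ha0]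
    calc √a = a * (1 / √a) := by field_simp; rw [sq_sqrt ha0.le]
      _ ≤ a * |sin (N * x)| := by gcongr
  calc |chirp (a * sin (N * x)) (s x)| ≤ 64 / |a * sin (N * x)| :=
        abs_chirp_le_of_two_le (hsa.trans hc) (hs x hx)
    _ ≤ 64 / √a := by gcongr

theorem tendsto_integral_chirp_mul {ι : Type*} {l : Filter ι} {a N : ι → ℝ} {s φ : ℝ → ℝ}
    (ha : Tendsto a l atTop) (hN : Tendsto N l atTop) (hs : ∀ x ∈ Icc (0:ℝ) 1, |s x| ≤ 2)
    (hφ : ContinuousOn φ (Icc 0 1)) :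
    Tendsto (fun i => ∫ x in (0:ℝ)..1, chirp (a i * sin (N i * x)) (s x) * φ x) l (𝓝 0) := by
  obtain ⟨M, hM⟩ := isCompact_Icc.exists_bound_of_continuousOn hφ
  have hbound : Tendsto (fun i => M * (80 / √(a i))) l (𝓝 0) := by
    simpa using (tendsto_const_nhds.div_atTop (tendsto_sqrt_atTop.comp ha)).const_mul M
  refine squeeze_zero_norm' ?_ hbound
  filter_upwards [ha.eventually_ge_atTop 4, hN.eventually_ge_atTop (2 * π)] with i hai hNi
  exact abs_integral_chirp_mul_le hai hNi hs hM

lemma integral_coeff_mul_eq_add_chirp {φ : ℝ → ℝ} (hφ : ContinuousOn φ (Icc 0 1)) (a N : ℝ) :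
    ∫ x in (0:ℝ)..1, (∫ y in (0:ℝ)..1,
        (1 + (1 / 2) * sin ((y + a * sin (N * x)) ^ 2)) * exp (y * (1 + sin x))) * φ x
      = (∫ x in (0:ℝ)..1, (exp (1 + sin x) - 1) / (1 + sin x) * φ x)
        + (∫ x in (0:ℝ)..1, chirp (a * sin (N * x)) (1 + sin x) * φ x) / 2 := by
  have hI : uIcc (0:ℝ) 1 = Icc 0 1 := uIcc_of_le zero_le_one
  have hne : ∀ x ∈ uIcc (0:ℝ) 1, 1 + sin x ≠ 0 := fun x hx => by
    rw [hI] at hx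
    linarith [sin_nonneg_of_nonneg_of_le_pi hx.1 (hx.2.trans (by linarith [pi_gt_three]))]
  have hg : IntervalIntegrable (fun x => (exp (1 + sin x) - 1) / (1 + sin x) * φ x) volume 0 1 :=
    ((ContinuousOn.div (by fun_prop) (by fun_prop) hne).mul (hI ▸ hφ)).intervalIntegrable
  have hc : IntervalIntegrable
      (fun x => chirp (a * sin (N * x)) (1 + sin x) * φ x / 2) volume 0 1 :=
    (((Continuous.chirp (by fun_prop) (by fun_prop)).continuousOn.mul (hI ▸ hφ)).div_const
      2).intervalIntegrable
  rw [← intervalIntegral.integral_div, ← intervalIntegral.integral_add hg hc]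
  refine intervalIntegral.integral_congr fun x hx => ?_
  simp only [integral_one_add_half_sin_sq_mul_exp _ (hne x hx)]
  ring

lemma tendsto_const_div_nhdsGT_zero {k : ℝ} (hk : 0 < k) :
    Tendsto (fun ε : ℝ => k / ε) (𝓝[>] 0) atTop :=
  (tendsto_inv_nhdsGT_zero.const_mul_atTop hk).congr fun ε => by ring

/-- The heavily oscillatory coefficient `A^ε` converges weakly in `L²(0,1)` to
`A*(x) = (e^{1+sin x} − 1)/(1 + sin x)` as `ε → 0⁺`. -/
theorem stmt_14 (A : ℝ → ℝ → ℝ)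
    (hA : ∀ ε x, A ε x = ∫ y in (0:ℝ)..1,
      (1 + (1 / 2) * Real.sin ((y + (1 / (2 * ε)) *
        Real.sin (Real.pi * Real.sqrt (2 / ε) * x)) ^ 2)) *
        Real.exp (y * (1 + Real.sin x))) :
    ∀ φ : ℝ → ℝ, ContinuousOn φ (Icc 0 1) →
      Tendsto (fun ε => ∫ x in (0:ℝ)..1, A ε x * φ x)
        (nhdsWithin 0 (Ioi 0))
        (nhds (∫ x in (0:ℝ)..1,
          ((Real.exp (1 + Real.sin x) - 1) / (1 + Real.sin x)) * φ x)) := by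
  intro φ hφ
  have ha : Tendsto (fun ε : ℝ => 1 / (2 * ε)) (𝓝[>] 0) atTop :=
    (tendsto_const_div_nhdsGT_zero (k := 1 / 2) (by norm_num)).congr fun ε => by ring
  have hN : Tendsto (fun ε : ℝ => π * √(2 / ε)) (𝓝[>] 0) atTop :=
    (tendsto_sqrt_atTop.comp (tendsto_const_div_nhdsGT_zero two_pos)).const_mul_atTop pi_pos
  have hs : ∀ x ∈ Icc (0:ℝ) 1, |1 + sin x| ≤ 2 := fun x _ =>
    abs_le.2 ⟨by linarith [neg_one_le_sin x], by linarith [sin_le_one x]⟩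
  simp only [hA, integral_coeff_mul_eq_add_chirp hφ]
  simpa using tendsto_const_nhds.add ((tendsto_integral_chirp_mul ha hN hs hφ).div_const 2)
end

section
/- For t ∈ [0,1] define A*(t) := (∫_{[0,1]²} (3.1 + (t+1) sin(2π s₁) + sin(2π s₂))⁻¹ ds₁ ds₂)⁻¹, the reciprocal of the expectation of the reciprocal coefficient (note 3.1 − (t+1) − 1 ≥ 0.1 > 0 on [0,1], so all reciprocals are well defined). Then for every ω = (ω₁, ω₂) ∈ [0,1]² and every x ∈ [0,1], lim_{ε→0⁺} ∫₀ˣ (3.1 + (t+1) sin(2π(ω₁ + t/ε)) + sin(2π(ω₂ + √2·t/ε)))⁻¹ dt = ∫₀ˣ (1/A*(t)) dt. In particular, the reciprocals of the random multiscale coefficient A^ε(x, ω) = 3.1 + (x+1) sin(2π(ω₁ + x/ε)) + sin(2π(ω₂ + √2 x/ε)) converge weakly to 1/A*, independently of the realization ω; i.e., the G-limit of this ergodic random coefficient is the deterministic function A*(x) = 1/E[1/A(x,·)]. -/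
/-!
Along the Kronecker flow `t ↦ (ω₁ + t/ε, ω₂ + α t/ε)` with `α` irrational (here `α = √2`), a
trigonometric monomial `g(t) 𝐞(j θ₁ + l θ₂)` becomes `𝐞(j ω₁ + l ω₂) g(t) 𝐞((j + α l) t/ε)`.
Unless `j = l = 0` the frequency `j + α l` is nonzero, so by the Riemann–Lebesgue lemma the integral
over `[0, x]` tends to `0`, which is also the mean of the monomial over the torus. By linearity the
same holds for trigonometric polynomials in `θ` with coefficients continuous in `t`, and by an
`ε/3` argument for their uniform limits. For `t ∈ [0, 1]` the coefficient is `3.1 + S` with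
`|S| ≤ 3`, so its reciprocal is the uniform limit of the partial sums of `∑ (-S)ⁿ / 3.1ⁿ⁺¹`, and
every `Sⁿ` is such a polynomial.
-/

open MeasureTheory Set Filter Topology
open scoped FourierTransform Interval

noncomputable section

namespace KroneckerHomogenization

def trigMonomial (g : C(ℝ, ℂ)) (j l : ℤ) : C(ℝ × ℝ × ℝ, ℂ) :=
  ⟨fun p => g p.1 * 𝐞 (j * p.2.1 + l * p.2.2), by fun_prop⟩

@[simp]
lemma trigMonomial_apply (g : C(ℝ, ℂ)) (j l : ℤ) (p : ℝ × ℝ × ℝ) :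
    trigMonomial g j l p = g p.1 * 𝐞 (j * p.2.1 + l * p.2.2) := rfl

lemma trigMonomial_mul (g g' : C(ℝ, ℂ)) (j j' l l' : ℤ) :
    trigMonomial g j l * trigMonomial g' j' l' = trigMonomial (g * g') (j + j') (l + l') := by
  ext p
  simp only [ContinuousMap.mul_apply, trigMonomial_apply, Int.cast_add, add_mul,
    AddChar.map_add_eq_mul, Circle.coe_mul]
  ring

def trigMonomials : Submonoid C(ℝ × ℝ × ℝ, ℂ) where
  carrier := {f | ∃ g j l, trigMonomial g j l = f}
  mul_mem' := by
    rintro _ _ ⟨g, j, l, rfl⟩ ⟨g', j', l', rfl⟩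
    exact ⟨_, _, _, (trigMonomial_mul g g' j j' l l').symm⟩
  one_mem' := ⟨1, 0, 0, by ext; simp⟩

lemma integral_fourierChar_intCast_mul (j : ℤ) :
    ∫ s in (0:ℝ)..1, (𝐞 (j * s) : ℂ) = if j = 0 then 1 else 0 := by
  split_ifs with hj
  · simp [hj]
  have hc : j * (2 * Real.pi * Complex.I) ≠ 0 := by simp [Real.pi_ne_zero, hj]
  have hexp (s : ℝ) : (𝐞 (j * s) : ℂ) = Complex.exp (j * (2 * Real.pi * Complex.I) * s) := by
    rw [Real.fourierChar_apply]; push_cast; ring_nf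
  simp_rw [hexp, integral_exp_mul_complex hc, Complex.ofReal_one, mul_one,
    Complex.exp_int_mul_two_pi_mul_I]
  simp

lemma ofReal_sin_two_pi_mul (θ : ℝ) :
    (Real.sin (2 * Real.pi * θ) : ℂ) = (𝐞 θ - 𝐞 (-θ)) / (2 * Complex.I) := by
  rw [Real.fourierChar_apply, Real.fourierChar_apply, Complex.ofReal_sin, Complex.sin,
    div_eq_mul_inv (b := 2 * Complex.I), mul_inv, Complex.inv_I]
  push_cast
  ring_nf

lemma tendsto_intervalIntegral_fourierChar_mul_cocompact (g : ℝ → ℂ) (a b : ℝ) :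
    Tendsto (fun w => ∫ v in a..b, 𝐞 (-(v * w)) * g v) (cocompact ℝ) (𝓝 0) := by
  have h (s : Set ℝ) (hs : MeasurableSet s) :
      Tendsto (fun w => ∫ v in s, 𝐞 (-(v * w)) * g v) (cocompact ℝ) (𝓝 0) := by
    refine (Real.tendsto_integral_exp_smul_cocompact (s.indicator g)).congr fun w => ?_
    rw [← MeasureTheory.integral_indicator hs]
    simp_rw [Circle.smul_def, smul_eq_mul, indicator_mul_right]
  simpa [intervalIntegral] using (h _ measurableSet_Ioc).sub (h _ measurableSet_Ioc)

lemma tendsto_div_nhdsGT_zero_cocompact {c : ℝ} (hc : c ≠ 0) :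
    Tendsto (fun ε => c / ε) (𝓝[>] 0) (cocompact ℝ) := by
  refine tendsto_cocompact_of_tendsto_dist_comp_atTop 0 ?_
  refine (tendsto_inv_nhdsGT_zero.const_mul_atTop (abs_pos.2 hc)).congr' ?_
  filter_upwards [self_mem_nhdsWithin] with ε (hε : 0 < ε)
  rw [dist_zero_right, Real.norm_eq_abs, abs_div, abs_of_pos hε, div_eq_mul_inv]

lemma tsum_inv_mul_neg_inv_pow_mul_pow {K : Type*} [NormedField K] {a z : K} (ha : a ≠ 0)
    (hz : ‖z‖ < ‖a‖) : ∑' n : ℕ, a⁻¹ * (-a⁻¹) ^ n * z ^ n = (a + z)⁻¹ := by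
  have hq : ‖-a⁻¹ * z‖ < 1 := by
    rwa [norm_mul, norm_neg, norm_inv, inv_mul_lt_one₀ (norm_pos_iff.2 ha)]
  simp_rw [mul_assoc, ← mul_pow]
  rw [tsum_mul_left, tsum_geometric_of_norm_lt_one hq, ← mul_inv, mul_sub, mul_one,
    neg_mul, mul_neg, ← mul_assoc, mul_inv_cancel₀ ha, one_mul, sub_neg_eq_add]

section Homogenization

variable (α ω₁ ω₂ x : ℝ)

def oscIntegral (ε : ℝ) : C(ℝ × ℝ × ℝ, ℂ) →ₗ[ℂ] ℂ where
  toFun f := ∫ t in (0:ℝ)..x, f (t, ω₁ + t / ε, ω₂ + α * t / ε)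
  map_add' f g := intervalIntegral.integral_add (by apply Continuous.intervalIntegrable; fun_prop)
    (by apply Continuous.intervalIntegrable; fun_prop)
  map_smul' c f := intervalIntegral.integral_smul c _

def torusMean : C(ℝ × ℝ × ℝ, ℂ) →ₗ[ℂ] C(ℝ, ℂ) where
  toFun f := ⟨fun t => ∫ s₁ in (0:ℝ)..1, ∫ s₂ in (0:ℝ)..1, f (t, s₁, s₂), by fun_prop⟩
  map_add' f g := by
    ext t
    simp only [ContinuousMap.coe_mk, ContinuousMap.add_apply]
    rw [← intervalIntegral.integral_add (by apply Continuous.intervalIntegrable; fun_prop)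
      (by apply Continuous.intervalIntegrable; fun_prop)]
    refine intervalIntegral.integral_congr fun s₁ _ => ?_
    exact intervalIntegral.integral_add (by apply Continuous.intervalIntegrable; fun_prop)
      (by apply Continuous.intervalIntegrable; fun_prop)
  map_smul' c f := by
    ext t
    simp [intervalIntegral.integral_const_mul]

def meanIntegral : C(ℝ × ℝ × ℝ, ℂ) →ₗ[ℂ] ℂ where
  toFun f := ∫ t in (0:ℝ)..x, torusMean f t
  map_add' f g := by
    simp only [map_add, ContinuousMap.add_apply]
    exact intervalIntegral.integral_add ((torusMean f).continuous.intervalIntegrable _ _)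
      ((torusMean g).continuous.intervalIntegrable _ _)
  map_smul' c f := by simp [intervalIntegral.integral_const_mul]

lemma oscIntegral_apply (ε : ℝ) (f : C(ℝ × ℝ × ℝ, ℂ)) :
    oscIntegral α ω₁ ω₂ x ε f = ∫ t in (0:ℝ)..x, f (t, ω₁ + t / ε, ω₂ + α * t / ε) := rfl

lemma torusMean_apply (f : C(ℝ × ℝ × ℝ, ℂ)) (t : ℝ) :
    torusMean f t = ∫ s₁ in (0:ℝ)..1, ∫ s₂ in (0:ℝ)..1, f (t, s₁, s₂) := rfl

lemma meanIntegral_apply (f : C(ℝ × ℝ × ℝ, ℂ)) :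
    meanIntegral x f = ∫ t in (0:ℝ)..x, torusMean f t := rfl

def Homogenizes (f : C(ℝ × ℝ × ℝ, ℂ)) : Prop :=
  Tendsto (fun ε => oscIntegral α ω₁ ω₂ x ε f) (𝓝[>] 0) (𝓝 (meanIntegral x f))

lemma torusMean_trigMonomial (g : C(ℝ, ℂ)) (j l : ℤ) (t : ℝ) :
    torusMean (trigMonomial g j l) t = if j = 0 ∧ l = 0 then g t else 0 := by
  simp only [torusMean_apply, trigMonomial_apply, AddChar.map_add_eq_mul, Circle.coe_mul,
    ← mul_assoc, intervalIntegral.integral_const_mul, intervalIntegral.integral_mul_const]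
  rw [integral_fourierChar_intCast_mul, integral_fourierChar_intCast_mul]
  by_cases hj : j = 0 <;> by_cases hl : l = 0 <;> simp [hj, hl]

variable {α ω₁ ω₂ x}

lemma homogenizes_trigMonomial (hα : Irrational α) (g : C(ℝ, ℂ)) (j l : ℤ) :
    Homogenizes α ω₁ ω₂ x (trigMonomial g j l) := by
  have hmean : meanIntegral x (trigMonomial g j l)
      = if j = 0 ∧ l = 0 then ∫ t in (0:ℝ)..x, g t else 0 := by
    simp only [meanIntegral_apply, torusMean_trigMonomial]
    split_ifs <;> simp
  unfold Homogenizes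
  rw [hmean]
  split_ifs with h
  · obtain ⟨rfl, rfl⟩ := h
    simp [oscIntegral_apply]
  · have hc : (j : ℝ) + α * l ≠ 0 := by
      rcases eq_or_ne l 0 with rfl | hl
      · simpa using h
      · exact ((hα.mul_intCast hl).intCast_add j).ne_zero
    have hosc (ε : ℝ) : oscIntegral α ω₁ ω₂ x ε (trigMonomial g j l)
        = 𝐞 (j * ω₁ + l * ω₂) * ∫ t in (0:ℝ)..x, 𝐞 (-(t * (-(j + α * l) / ε))) * g t := by
      simp only [oscIntegral_apply, trigMonomial_apply, ← intervalIntegral.integral_const_mul]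
      refine intervalIntegral.integral_congr fun t _ => ?_
      rw [show (j : ℝ) * (ω₁ + t / ε) + l * (ω₂ + α * t / ε)
          = (j * ω₁ + l * ω₂) + -(t * (-(j + α * l) / ε)) by ring,
        AddChar.map_add_eq_mul, Circle.coe_mul]
      ring
    simp_rw [hosc]
    simpa using ((tendsto_intervalIntegral_fourierChar_mul_cocompact g 0 x).comp
      (tendsto_div_nhdsGT_zero_cocompact (neg_ne_zero.2 hc))).const_mul (𝐞 (j * ω₁ + l * ω₂) : ℂ)

theorem homogenizes_of_mem_adjoin (hα : Irrational α) {f : C(ℝ × ℝ × ℝ, ℂ)}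
    (hf : f ∈ Algebra.adjoin ℂ (trigMonomials : Set C(ℝ × ℝ × ℝ, ℂ))) :
    Homogenizes α ω₁ ω₂ x f := by
  rw [← Subalgebra.mem_toSubmodule, Algebra.adjoin_eq_span, Submonoid.closure_eq] at hf
  induction hf using Submodule.span_induction with
  | mem f hf =>
    obtain ⟨g, j, l, rfl⟩ := hf
    exact homogenizes_trigMonomial hα g j l
  | zero => simp [Homogenizes]
  | add f g _ _ hf hg => simpa only [Homogenizes, map_add] using hf.add hg
  | smul c f _ hf => simpa only [Homogenizes, map_smul] using hf.const_smul c

lemma norm_oscIntegral_le {f : C(ℝ × ℝ × ℝ, ℂ)} {C : ℝ}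
    (hf : ∀ p ∈ Ι 0 x ×ˢ univ, ‖f p‖ ≤ C) (ε : ℝ) :
    ‖oscIntegral α ω₁ ω₂ x ε f‖ ≤ C * |x| := by
  simpa [oscIntegral_apply] using intervalIntegral.norm_integral_le_of_norm_le_const
    fun t ht => hf (t, ω₁ + t / ε, ω₂ + α * t / ε) ⟨ht, mem_univ _⟩

lemma norm_meanIntegral_le {f : C(ℝ × ℝ × ℝ, ℂ)} {C : ℝ}
    (hf : ∀ p ∈ Ι 0 x ×ˢ univ, ‖f p‖ ≤ C) :
    ‖meanIntegral x f‖ ≤ C * |x| := by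
  have hmean : ∀ t ∈ Ι 0 x, ‖torusMean f t‖ ≤ C := fun t ht => by
    have h (s₁ : ℝ) : ‖∫ s₂ in (0:ℝ)..1, f (t, s₁, s₂)‖ ≤ C :=
      (intervalIntegral.norm_integral_le_of_norm_le_const
        fun s₂ _ => hf (t, s₁, s₂) ⟨ht, mem_univ _⟩).trans_eq (by simp)
    exact (intervalIntegral.norm_integral_le_of_norm_le_const fun s₁ _ => h s₁).trans_eq (by simp)
  simpa [meanIntegral_apply] using intervalIntegral.norm_integral_le_of_norm_le_const hmean

theorem Homogenizes.of_tendstoUniformlyOn {F : ℕ → C(ℝ × ℝ × ℝ, ℂ)} {f : C(ℝ × ℝ × ℝ, ℂ)}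
    (hF : ∀ N, Homogenizes α ω₁ ω₂ x (F N))
    (hFf : TendstoUniformlyOn (fun N => ⇑(F N)) f atTop (Ι 0 x ×ˢ univ)) :
    Homogenizes α ω₁ ω₂ x f := by
  have hclose : ∀ r > 0, ∀ᶠ N in atTop, (∀ ε, ‖oscIntegral α ω₁ ω₂ x ε (f - F N)‖ < r) ∧
      ‖meanIntegral x (f - F N)‖ < r := by
    intro r hr
    have hr' : 0 < r / (|x| + 1) := by positivity
    have hlt : r / (|x| + 1) * |x| < r := by
      rw [div_mul_eq_mul_div, div_lt_iff₀ (by positivity)]; nlinarith [abs_nonneg x]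
    filter_upwards [Metric.tendstoUniformlyOn_iff.1 hFf _ hr'] with N hN
    have hb : ∀ p ∈ Ι 0 x ×ˢ univ, ‖(f - F N) p‖ ≤ r / (|x| + 1) := fun p hp => by
      simpa [dist_eq_norm] using (hN p hp).le
    exact ⟨fun ε => (norm_oscIntegral_le hb ε).trans_lt hlt, (norm_meanIntegral_le hb).trans_lt hlt⟩
  refine TendstoUniformly.tendsto_of_eventually_tendsto (p := atTop)
    (F := fun N ε => oscIntegral α ω₁ ω₂ x ε (F N)) (L := fun N => meanIntegral x (F N))
    ?_ (Eventually.of_forall hF) ?_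
  · refine Metric.tendstoUniformly_iff.2 fun r hr => ?_
    filter_upwards [hclose r hr] with N hN ε
    simpa only [dist_eq_norm, map_sub] using hN.1 ε
  · refine Metric.tendsto_nhds.2 fun r hr => ?_
    filter_upwards [hclose r hr] with N hN
    simpa only [dist_eq_norm', map_sub] using hN.2

end Homogenization

def coeff (t θ₁ θ₂ : ℝ) : ℝ :=
  3.1 + (t + 1) * Real.sin (2 * Real.pi * θ₁) + Real.sin (2 * Real.pi * θ₂)

lemma abs_coeff_sub_le {t : ℝ} (ht : t ∈ Icc (0:ℝ) 1) (θ₁ θ₂ : ℝ) :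
    |coeff t θ₁ θ₂ - 3.1| ≤ 3 := by
  have h₁ := Real.abs_sin_le_one (2 * Real.pi * θ₁)
  have h₂ := Real.abs_sin_le_one (2 * Real.pi * θ₂)
  calc |coeff t θ₁ θ₂ - 3.1|
        ≤ (t + 1) * |Real.sin (2 * Real.pi * θ₁)| + |Real.sin (2 * Real.pi * θ₂)| := by
        rw [show coeff t θ₁ θ₂ - 3.1 = (t + 1) * Real.sin (2 * Real.pi * θ₁)
          + Real.sin (2 * Real.pi * θ₂) by unfold coeff; ring]
        refine (abs_add_le _ _).trans_eq ?_
        rw [abs_mul, abs_of_nonneg (by linarith [ht.1])]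
    _ ≤ 2 * 1 + 1 := by gcongr; linarith [ht.2]
    _ = 3 := by norm_num

lemma coeff_pos {t : ℝ} (ht : t ∈ Icc (0:ℝ) 1) (θ₁ θ₂ : ℝ) : 0 < coeff t θ₁ θ₂ := by
  linarith [(abs_le.1 (abs_coeff_sub_le ht θ₁ θ₂)).1]

def fluctuation : C(ℝ × ℝ × ℝ, ℂ) :=
  ⟨fun p => (coeff p.1 p.2.1 p.2.2 - 3.1 : ℝ), by unfold coeff; fun_prop⟩

lemma fluctuation_mem_adjoin :
    fluctuation ∈ Algebra.adjoin ℂ (trigMonomials : Set C(ℝ × ℝ × ℝ, ℂ)) := by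
  let g : C(ℝ, ℂ) := ⟨fun t => t + 1, by fun_prop⟩
  have h : fluctuation = (2 * Complex.I)⁻¹ • (trigMonomial g 1 0 - trigMonomial g (-1) 0
      + trigMonomial 1 0 1 - trigMonomial 1 0 (-1)) := by
    ext p
    simp only [fluctuation, coeff, g, ContinuousMap.coe_mk, ContinuousMap.smul_apply,
      ContinuousMap.sub_apply, ContinuousMap.add_apply, trigMonomial_apply, Complex.ofReal_sub,
      Complex.ofReal_add, Complex.ofReal_mul, ofReal_sin_two_pi_mul]
    simp only [Int.cast_one, Int.cast_zero, Int.cast_neg, one_mul, zero_mul, add_zero, zero_add,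
      neg_one_mul, ContinuousMap.one_apply, smul_eq_mul, Complex.ofReal_one]
    ring
  have hmem (g : C(ℝ, ℂ)) (j l : ℤ) :
      trigMonomial g j l ∈ Algebra.adjoin ℂ (trigMonomials : Set C(ℝ × ℝ × ℝ, ℂ)) :=
    Algebra.subset_adjoin ⟨g, j, l, rfl⟩
  rw [h]
  exact Subalgebra.smul_mem _
    (sub_mem (add_mem (sub_mem (hmem _ _ _) (hmem _ _ _)) (hmem _ _ _)) (hmem _ _ _)) _

/-- `t` is clamped to `[0, 1]`, where the coefficient is at least `0.1`, so that the reciprocal is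
continuous everywhere; only `t ∈ [0, 1]` enters the theorem. -/
def coeffInv : C(ℝ × ℝ × ℝ, ℂ) :=
  ⟨fun p => ((coeff (projIcc 0 1 zero_le_one p.1) p.2.1 p.2.2)⁻¹ : ℝ), by
    refine Complex.continuous_ofReal.comp
      (Continuous.inv₀ ?_ fun p => (coeff_pos (projIcc 0 1 _ p.1).2 _ _).ne')
    unfold coeff
    fun_prop⟩

lemma coeffInv_apply_of_mem {t : ℝ} (ht : t ∈ Icc (0:ℝ) 1) (θ₁ θ₂ : ℝ) :
    coeffInv (t, θ₁, θ₂) = ((coeff t θ₁ θ₂)⁻¹ : ℝ) := by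
  simp [coeffInv, projIcc_of_mem _ ht]

def geomApprox (N : ℕ) : C(ℝ × ℝ × ℝ, ℂ) :=
  ∑ n ∈ Finset.range N, ((3.1 : ℂ)⁻¹ * (-(3.1 : ℂ)⁻¹) ^ n) • fluctuation ^ n

lemma geomApprox_mem_adjoin (N : ℕ) :
    geomApprox N ∈ Algebra.adjoin ℂ (trigMonomials : Set C(ℝ × ℝ × ℝ, ℂ)) :=
  Subalgebra.sum_mem _ fun n _ => Subalgebra.smul_mem _ (pow_mem fluctuation_mem_adjoin n) _

lemma tendstoUniformlyOn_geomApprox :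
    TendstoUniformlyOn (fun N => ⇑(geomApprox N)) coeffInv atTop (Icc 0 1 ×ˢ univ) := by
  have hnorm : ‖(3.1 : ℂ)‖ = 3.1 := by
    rw [show (3.1 : ℂ) = ((3.1 : ℝ) : ℂ) by norm_num, Complex.norm_real, Real.norm_eq_abs]
    norm_num
  have hS : ∀ p ∈ Icc (0:ℝ) 1 ×ˢ (univ : Set (ℝ × ℝ)), ‖fluctuation p‖ ≤ 3 := fun p hp => by
    show ‖((coeff p.1 p.2.1 p.2.2 - 3.1 : ℝ) : ℂ)‖ ≤ 3
    rw [Complex.norm_real, Real.norm_eq_abs]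
    exact abs_coeff_sub_le hp.1 p.2.1 p.2.2
  have hterm : ∀ n, ∀ p ∈ Icc (0:ℝ) 1 ×ˢ (univ : Set (ℝ × ℝ)),
      ‖(3.1 : ℂ)⁻¹ * (-(3.1 : ℂ)⁻¹) ^ n * fluctuation p ^ n‖ ≤ (3.1 : ℝ)⁻¹ * (3 / 3.1) ^ n := by
    intro n p hp
    rw [mul_assoc, ← mul_pow, norm_mul, norm_pow, norm_mul, norm_neg, norm_inv, hnorm,
      div_eq_inv_mul (3:ℝ)]
    gcongr
    exact hS p hp
  have hsum : Summable fun n : ℕ => (3.1 : ℝ)⁻¹ * (3 / 3.1) ^ n :=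
    (summable_geometric_of_lt_one (by norm_num) (by norm_num)).mul_left _
  have hgeom := tendstoUniformlyOn_tsum_nat hsum hterm
  refine (hgeom.congr_right fun p hp => ?_).congr (Eventually.of_forall fun N p _ => ?_)
  · rw [tsum_inv_mul_neg_inv_pow_mul_pow (by norm_num) ((hS p hp).trans_lt (by norm_num [hnorm])),
      coeffInv_apply_of_mem hp.1]
    simp [fluctuation]
  · simp [geomApprox]

theorem tendsto_integral_inv_coeff {α : ℝ} (hα : Irrational α) (ω₁ ω₂ : ℝ) {x : ℝ}
    (hx : x ∈ Icc (0:ℝ) 1) :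
    Tendsto (fun ε => ∫ t in (0:ℝ)..x, (coeff t (ω₁ + t / ε) (ω₂ + α * t / ε))⁻¹) (𝓝[>] 0)
      (𝓝 (∫ t in (0:ℝ)..x, ∫ s₁ in (0:ℝ)..1, ∫ s₂ in (0:ℝ)..1, (coeff t s₁ s₂)⁻¹)) := by
  have hsub : [[0, x]] ⊆ Icc 0 1 := uIcc_subset_Icc ⟨le_rfl, zero_le_one⟩ hx
  have h : Homogenizes α ω₁ ω₂ x coeffInv := .of_tendstoUniformlyOn
    (fun N => homogenizes_of_mem_adjoin hα (geomApprox_mem_adjoin N))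
    (tendstoUniformlyOn_geomApprox.mono (prod_mono (uIoc_subset_uIcc.trans hsub) subset_rfl))
  have hosc (ε : ℝ) : oscIntegral α ω₁ ω₂ x ε coeffInv
      = ↑(∫ t in (0:ℝ)..x, (coeff t (ω₁ + t / ε) (ω₂ + α * t / ε))⁻¹) := by
    rw [oscIntegral_apply, ← intervalIntegral.integral_ofReal]
    exact intervalIntegral.integral_congr fun t ht => coeffInv_apply_of_mem (hsub ht) _ _
  have hmean : meanIntegral x coeffInv
      = ↑(∫ t in (0:ℝ)..x, ∫ s₁ in (0:ℝ)..1, ∫ s₂ in (0:ℝ)..1, (coeff t s₁ s₂)⁻¹) := by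
    rw [meanIntegral_apply, ← intervalIntegral.integral_ofReal]
    refine intervalIntegral.integral_congr fun t ht => ?_
    simp only [torusMean_apply, coeffInv_apply_of_mem (hsub ht), intervalIntegral.integral_ofReal]
  rw [← tendsto_ofReal_iff]
  simpa only [Homogenizes, hosc, hmean] using h

end KroneckerHomogenization

end

/-- The G-limit of the ergodic random coefficient
`A^ε(x,ω) = 3.1 + (x+1) sin(2π(ω₁ + x/ε)) + sin(2π(ω₂ + √2 x/ε))` is the deterministic
function `A*(x) = 1/E[1/A(x,·)]`, independently of the realization `ω`:
the reciprocals converge weakly (over every interval `[0,x]`) to `1/A*`. -/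
theorem stmt_16 (Astar : ℝ → ℝ)
    (hA : ∀ t, Astar t =
      (∫ s₁ in (0:ℝ)..1, ∫ s₂ in (0:ℝ)..1,
        (3.1 + (t + 1) * Real.sin (2 * Real.pi * s₁) + Real.sin (2 * Real.pi * s₂))⁻¹)⁻¹) :
    ∀ ω₁ ∈ Icc (0:ℝ) 1, ∀ ω₂ ∈ Icc (0:ℝ) 1, ∀ x ∈ Icc (0:ℝ) 1,
      Tendsto
        (fun ε => ∫ t in (0:ℝ)..x,
          (3.1 + (t + 1) * Real.sin (2 * Real.pi * (ω₁ + t / ε)) +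
            Real.sin (2 * Real.pi * (ω₂ + Real.sqrt 2 * t / ε)))⁻¹)
        (nhdsWithin 0 (Ioi 0))
        (nhds (∫ t in (0:ℝ)..x, 1 / Astar t)) := by
  intro ω₁ _ ω₂ _ x hx
  simp_rw [hA, one_div, inv_inv]
  exact KroneckerHomogenization.tendsto_integral_inv_coeff irrational_sqrt_two ω₁ ω₂ hx
end
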